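/- arXiv:1312.0212 — 4 statements merged into one kernel-verified Lean document; each statement's English description precedes it below -/
import Mathlib

section
/- Let N ≥ 1 and let x_1,…,x_N be real numbers. Then for every x ∈ [−1,1] with x ≠ x_j for all j, the series ∑_{k=1}^∞ ( ∑_{j=1}^N h_k(x_j) ) · T_k(x) converges, and −∑_{j=1}^N log|x − x_j| = N·log 2 + ∑_{j=1}^N h₀(x_j) + ∑_{k=1}^∞ ( ∑_{j=1}^N h_k(x_j) ) · T_k(x). -/
open Filter Finset Topology Complex

/-- The Chebyshev polynomial of the first kind, evaluated at `x`. -/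
noncomputable def chebT (k : ℕ) (x : ℝ) : ℝ := (Polynomial.Chebyshev.T ℝ k).eval x

/-- The test functions `h_k` (for `k ≥ 1`) and `h₀` (for `k = 0`):
`h_k(x) = (2/k)T_k(x)` for `|x| ≤ 1`, `(2/k)(x ∓ √(x²−1))^k` for `±x > 1`;
`h₀(x) = 0` for `|x| ≤ 1`, `log(±x − √(x²−1))` for `±x > 1`. -/
noncomputable def hFun (k : ℕ) (x : ℝ) : ℝ :=
  if k = 0 then
    (if 1 < x then Real.log (x - Real.sqrt (x ^ 2 - 1))
     else if x < -1 then Real.log (-x - Real.sqrt (x ^ 2 - 1))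
     else 0)
  else
    (if 1 < x then (2 / (k : ℝ)) * (x - Real.sqrt (x ^ 2 - 1)) ^ k
     else if x < -1 then (2 / (k : ℝ)) * (x + Real.sqrt (x ^ 2 - 1)) ^ k
     else (2 / (k : ℝ)) * chebT k x)


lemma ckey {z : ℂ} (hz : ‖z‖ ≤ 1) (h1 : z ≠ 1) :
    Tendsto (fun n => ∑ k ∈ range n, z ^ k / k) atTop (𝓝 (-Complex.log (1 - z))) := by
  rcases lt_or_eq_of_le hz with hlt | heq
  · exact (Complex.hasSum_taylorSeries_neg_log hlt).tendsto_sum_nat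
  · -- ‖z‖ = 1
    have hz1 : ‖z‖ = 1 := heq
    have h1' : (1:ℂ) - z ≠ 0 := sub_ne_zero.mpr (Ne.symm h1)
    -- Cauchy sequence via Dirichlet's test
    have hb : ∀ n, ‖∑ i ∈ range n, z ^ i‖ ≤ 2 / ‖1 - z‖ := by
      intro n
      have h1'' : z - 1 ≠ 0 := sub_ne_zero.mpr h1
      rw [geom_sum_eq h1, norm_div]
      rw [div_le_div_iff₀ (norm_pos_iff.mpr h1'') (norm_pos_iff.mpr h1')]
      have hle : ‖z ^ n - 1‖ ≤ 2 := by
        calc ‖z ^ n - 1‖ ≤ ‖z ^ n‖ + ‖(1:ℂ)‖ := norm_sub_le _ _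
        _ = 2 := by rw [norm_pow, hz1]; norm_num
      calc ‖z ^ n - 1‖ * ‖1 - z‖ ≤ 2 * ‖1 - z‖ :=
            mul_le_mul_of_nonneg_right hle (norm_nonneg _)
        _ = 2 * ‖z - 1‖ := by rw [norm_sub_rev]
    set f : ℕ → ℝ := fun k => if k = 0 then 1 else 1 / k with hf
    have hfa : Antitone f := by
      intro a b hab
      simp only [hf]
      split_ifs with hb0 ha0 ha0
      · exact le_refl _
      · omega
      · rw [div_le_one (by positivity)]
        exact_mod_cast Nat.one_le_iff_ne_zero.mpr hb0
      · apply one_div_le_one_div_of_le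
        · exact_mod_cast Nat.pos_of_ne_zero ha0
        · exact_mod_cast hab
    have hf0 : Tendsto f atTop (𝓝 0) := by
      apply Tendsto.congr' _ tendsto_one_div_atTop_nhds_zero_nat
      filter_upwards [eventually_gt_atTop 0] with k hk
      simp [hf, hk.ne']
    have hC : CauchySeq fun n => ∑ i ∈ range n, f i • z ^ i :=
      hfa.cauchySeq_series_mul_of_tendsto_zero_of_bounded hf0 hb
    have hC2 : CauchySeq fun n => ∑ k ∈ range n, z ^ k / k := by
      have heq2 : ∀ n, ∑ k ∈ range n, z ^ k / k
          = (∑ i ∈ range n, f i • z ^ i) + -∑ i ∈ range n, (if i = 0 then (1:ℂ) else 0) := by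
        intro n
        rw [← Finset.sum_neg_distrib, ← Finset.sum_add_distrib]
        congr 1 with k
        rcases Nat.eq_zero_or_pos k with rfl | hk
        · simp [hf]
        · simp only [hf, hk.ne', if_neg, if_false, neg_zero, add_zero, Complex.real_smul]
          push_cast
          ring
      simp only [heq2]
      apply hC.add
      apply CauchySeq.neg
      apply Tendsto.cauchySeq (x := (1:ℂ))
      apply Tendsto.congr' _ tendsto_const_nhds
      filter_upwards [eventually_ge_atTop 1] with n hn
      rw [Finset.sum_ite_eq' (range n) 0 (fun _ => (1:ℂ)), if_pos (Finset.mem_range.mpr hn)]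
    obtain ⟨l, hl⟩ := cauchySeq_tendsto_of_complete hC2
    -- identify the limit via Abel's theorem
    have habel := Complex.tendsto_tsum_powerSeries_nhdsWithin_lt hl
    have hcont : Tendsto (fun x : ℝ => -Complex.log (1 - x * z)) (𝓝[<] (1:ℝ))
        (𝓝 (-Complex.log (1 - z))) := by
      have habs : ‖z‖ = 1 := by rw [hz1]
      have hslit : (1 - z) ∈ Complex.slitPlane := by
        left
        have hre : z.re ≤ 1 := le_trans (le_trans (le_abs_self _) (Complex.abs_re_le_norm z)) habs.le
        rcases lt_or_eq_of_le hre with h | h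
        · simpa using h
        · exfalso
          apply h1
          have hsq : z.re ^ 2 + z.im ^ 2 = 1 := by
            have := Complex.sq_norm z
            rw [habs] at this
            simpa [Complex.normSq_apply, sq] using this.symm
          have him : z.im = 0 := by nlinarith [sq_nonneg z.im]
          exact Complex.ext (by simpa using h) (by simpa using him)
      have : ContinuousAt (fun x : ℝ => -Complex.log (1 - x * z)) 1 := by
        apply ContinuousAt.neg
        apply (continuousAt_clog (by simpa using hslit)).comp
        fun_prop
      simpa using this.continuousWithinAt.tendsto
    have hmatch : Tendsto (fun x : ℝ => -Complex.log (1 - x * z)) (𝓝[<] (1:ℝ)) (𝓝 l) := by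
      rw [tendsto_map'_iff] at habel
      apply habel.congr'
      filter_upwards [Ioo_mem_nhdsLT_of_mem (by norm_num : (1:ℝ) ∈ Set.Ioc 0 1)] with x hx
      have hxz : ‖(x : ℂ) * z‖ < 1 := by
        rw [norm_mul, hz1, mul_one, Complex.norm_real, Real.norm_eq_abs,
          abs_of_pos hx.1]
        exact hx.2
      have htsum := (Complex.hasSum_taylorSeries_neg_log hxz).tsum_eq
      simp only [Function.comp_apply]
      rw [← htsum]
      congr 1 with n
      rw [mul_pow]
      ring
    have : l = -Complex.log (1 - z) := tendsto_nhds_unique hmatch hcont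
    rwa [this] at hl

lemma rkey {z : ℂ} (hz : ‖z‖ ≤ 1) (h1 : z ≠ 1) :
    Tendsto (fun n : ℕ => ∑ k ∈ Icc 1 n, (z ^ k / k).re) atTop
      (𝓝 (-Real.log ‖1 - z‖)) := by
  have h := (Complex.continuous_re.tendsto _).comp (ckey hz h1)
  simp only [Function.comp_def, Complex.re_sum, Complex.neg_re, Complex.log_re] at h
  have h2 := h.comp (tendsto_add_atTop_nat 1)
  apply h2.congr
  intro n
  simp only [Function.comp_apply]
  rw [Finset.range_eq_Ico, Finset.sum_eq_sum_Ico_succ_bot (Nat.succ_pos n)]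
  simp [Finset.Ico_add_one_right_eq_Icc]

lemma core (θ : ℝ) (u : ℂ) (hu : ‖u‖ ≤ 1)
    (h1 : Complex.exp (θ * I) * u ≠ 1) (h2 : Complex.exp (θ * I) * (starRingEnd ℂ) u ≠ 1) :
    Tendsto (fun n : ℕ => ∑ k ∈ Icc 1 n, 2 / (k : ℝ) * (u ^ k).re * Real.cos (k * θ)) atTop
      (𝓝 (-Real.log ‖(1 - Complex.exp (θ * I) * u) *
        (1 - Complex.exp (θ * I) * (starRingEnd ℂ) u)‖)) := by
  set e := Complex.exp (θ * I) with he
  have hen : ‖e‖ = 1 := by rw [he, Complex.norm_exp_ofReal_mul_I]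
  have hz1 : ‖e * u‖ ≤ 1 := by rw [norm_mul, hen, one_mul]; exact hu
  have hz2 : ‖e * (starRingEnd ℂ) u‖ ≤ 1 := by
    rw [norm_mul, hen, one_mul, RCLike.norm_conj]; exact hu
  have T := (rkey hz1 h1).add (rkey hz2 h2)
  have hne1 : (1 : ℂ) - e * u ≠ 0 := sub_ne_zero.mpr (Ne.symm h1)
  have hne2 : (1 : ℂ) - e * (starRingEnd ℂ) u ≠ 0 := sub_ne_zero.mpr (Ne.symm h2)
  convert T using 1
  · funext n
    rw [← Finset.sum_add_distrib]
    congr 1 with k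
    have hk1 : ((e * u) ^ k / k).re = ((e * u) ^ k).re / k := by
      rw [show ((k : ℂ)) = ((k : ℝ) : ℂ) by push_cast; ring, Complex.div_ofReal_re]
    have hk2 : ((e * (starRingEnd ℂ) u) ^ k / k).re
        = ((e * (starRingEnd ℂ) u) ^ k).re / k := by
      rw [show ((k : ℂ)) = ((k : ℝ) : ℂ) by push_cast; ring, Complex.div_ofReal_re]
    rw [hk1, hk2, ← add_div]
    have hre : ((e * u) ^ k).re + ((e * (starRingEnd ℂ) u) ^ k).re
        = Real.cos (k * θ) * (2 * (u ^ k).re) := by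
      have : (e * u) ^ k + (e * (starRingEnd ℂ) u) ^ k
          = e ^ k * ((2 * (u ^ k).re : ℝ) : ℂ) := by
        rw [mul_pow, mul_pow, ← map_pow, ← mul_add, Complex.add_conj]
      have h3 : ((e * u) ^ k + (e * (starRingEnd ℂ) u) ^ k).re
          = (e ^ k).re * (2 * (u ^ k).re) := by
        rw [this, Complex.mul_re]
        simp
      have h4 : (e ^ k).re = Real.cos (k * θ) := by
        rw [he, ← Complex.exp_nat_mul]
        have : (k : ℂ) * (θ * I) = ((k * θ : ℝ) : ℂ) * I := by push_cast; ring
        rw [this, Complex.exp_ofReal_mul_I_re]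
      rw [← Complex.add_re, h3, h4]
    rw [hre]
    ring
  · rw [norm_mul, Real.log_mul (norm_ne_zero_iff.mpr hne1) (norm_ne_zero_iff.mpr hne2)]
    ring

lemma coreR (θ w : ℝ) (hw : |w| ≤ 1) (hpos : 0 < 1 + w ^ 2 - 2 * Real.cos θ * w) :
    Tendsto (fun n : ℕ => ∑ k ∈ Icc 1 n, 2 / (k : ℝ) * w ^ k * Real.cos (k * θ)) atTop
      (𝓝 (-Real.log (1 + w ^ 2 - 2 * Real.cos θ * w))) := by
  have hu : ‖(w : ℂ)‖ ≤ 1 := by rwa [Complex.norm_real, Real.norm_eq_abs]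
  have hconj : (starRingEnd ℂ) (w : ℂ) = w := Complex.conj_ofReal w
  set e := Complex.exp (θ * I) with he
  have habs : ‖(1 - e * (w : ℂ)) * (1 - e * (starRingEnd ℂ) (w : ℂ))‖
      = 1 + w ^ 2 - 2 * Real.cos θ * w := by
    rw [hconj, ← sq, norm_pow, Complex.sq_norm, Complex.normSq_apply]
    simp only [Complex.sub_re, Complex.sub_im, Complex.mul_re, Complex.mul_im,
      Complex.ofReal_re, Complex.ofReal_im, Complex.one_re, Complex.one_im, he,
      Complex.exp_ofReal_mul_I_re, Complex.exp_ofReal_mul_I_im]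
    nlinarith [Real.sin_sq_add_cos_sq θ]
  have h1 : e * (w : ℂ) ≠ 1 := by
    intro h
    rw [h] at habs
    simp at habs
    linarith
  have h2 : e * (starRingEnd ℂ) (w : ℂ) ≠ 1 := by rwa [hconj]
  have T := core θ (w : ℂ) hu h1 h2
  rw [← he, habs] at T
  apply T.congr
  intro n
  apply Finset.sum_congr rfl
  intro k _
  rw [← Complex.ofReal_pow, Complex.ofReal_re]

lemma hcheb {a : ℝ} (ha : a ∈ Set.Icc (-1 : ℝ) 1) (k : ℕ) :
    chebT k a = Real.cos (k * Real.arccos a) := by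
  have h := Polynomial.Chebyshev.T_real_cos (Real.arccos a) (k : ℤ)
  rw [Real.cos_arccos ha.1 ha.2] at h
  rw [chebT]
  exact_mod_cast h

lemma pointwise {t y : ℝ} (ht : t ∈ Set.Icc (-1 : ℝ) 1) (hty : t ≠ y) :
    Tendsto (fun n : ℕ => Real.log 2 + hFun 0 y + ∑ k ∈ Icc 1 n, hFun k y * chebT k t)
      atTop (𝓝 (-Real.log |t - y|)) := by
  set θ := Real.arccos t with hθ
  have hcost : Real.cos θ = t := Real.cos_arccos ht.1 ht.2
  have hchebt : ∀ k : ℕ, chebT k t = Real.cos (k * θ) := fun k => hcheb ht k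
  by_cases hy1 : 1 < y
  · -- y > 1
    set s := Real.sqrt (y ^ 2 - 1) with hsdef
    have hs : s ^ 2 = y ^ 2 - 1 := Real.sq_sqrt (by nlinarith)
    have hs0 : 0 ≤ s := Real.sqrt_nonneg _
    set w := y - s with hwdef
    have hwpos : 0 < w := by nlinarith
    have hwlt : w < 1 := by nlinarith
    have hw : |w| ≤ 1 := by rw [abs_of_pos hwpos]; linarith
    have hw2y : 1 + w ^ 2 = 2 * y * w := by simp only [hwdef]; linear_combination hs
    have hpos : 0 < 1 + w ^ 2 - 2 * Real.cos θ * w := by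
      rw [hcost]
      nlinarith [mul_pos hwpos (show (0:ℝ) < y - t by linarith [ht.2])]
    have T := coreR θ w hw hpos
    rw [hcost] at T
    have hval : 1 + w ^ 2 - 2 * t * w = 2 * w * (y - t) := by linear_combination hw2y
    rw [hval] at T
    have hfin := (tendsto_const_nhds (x := Real.log 2 + hFun 0 y) (f := atTop)).add T
    have hytpos : 0 < y - t := by linarith [ht.2]
    have h0 : hFun 0 y = Real.log w := by simp [hFun, hy1, hwdef, hsdef]
    have hvalue : Real.log 2 + hFun 0 y + -Real.log (2 * w * (y - t)) = -Real.log |t - y| := by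
      rw [h0, Real.log_mul (by positivity) (by positivity), Real.log_mul two_ne_zero (by positivity),
        abs_of_neg (by linarith : t - y < 0), show -(t - y) = y - t by ring]
      ring
    rw [hvalue] at hfin
    apply hfin.congr
    intro n
    congr 1
    apply Finset.sum_congr rfl
    intro k hk
    have hk0 : k ≠ 0 := by
      have := (Finset.mem_Icc.mp hk).1
      omega
    rw [hchebt k]
    simp only [hFun, if_neg hk0, if_pos hy1]
    rfl
  · by_cases hy2 : y < -1
    · -- y < -1
      set s := Real.sqrt (y ^ 2 - 1) with hsdef
      have hs : s ^ 2 = y ^ 2 - 1 := Real.sq_sqrt (by nlinarith)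
      have hs0 : 0 ≤ s := Real.sqrt_nonneg _
      set w := y + s with hwdef
      have hwneg : w < 0 := by nlinarith
      have hwgt : -1 < w := by nlinarith
      have hw : |w| ≤ 1 := abs_le.mpr ⟨by linarith, by linarith⟩
      have hw2y : 1 + w ^ 2 = 2 * y * w := by simp only [hwdef]; linear_combination hs
      have htypos : 0 < t - y := by linarith [ht.1]
      have hpos : 0 < 1 + w ^ 2 - 2 * Real.cos θ * w := by
        rw [hcost]
        nlinarith [mul_pos (show (0:ℝ) < -w by linarith) htypos]
      have T := coreR θ w hw hpos
      rw [hcost] at T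
      have hval : 1 + w ^ 2 - 2 * t * w = 2 * (-w) * (t - y) := by linear_combination hw2y
      rw [hval] at T
      have hfin := (tendsto_const_nhds (x := Real.log 2 + hFun 0 y) (f := atTop)).add T
      have h0 : hFun 0 y = Real.log (-w) := by
        have hh : hFun 0 y = Real.log (-y - Real.sqrt (y ^ 2 - 1)) := by
          simp [hFun, hy1, hy2]
        rw [hh, hwdef, hsdef]
        congr 1
        ring
      have hvalue : Real.log 2 + hFun 0 y + -Real.log (2 * (-w) * (t - y)) = -Real.log |t - y| := by
        rw [h0, Real.log_mul (ne_of_gt (by nlinarith : (0:ℝ) < 2 * -w)) (ne_of_gt htypos),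
          Real.log_mul two_ne_zero (ne_of_gt (by linarith : (0:ℝ) < -w)), abs_of_pos htypos]
        ring
      rw [hvalue] at hfin
      apply hfin.congr
      intro n
      congr 1
      apply Finset.sum_congr rfl
      intro k hk
      have hk0 : k ≠ 0 := by
        have := (Finset.mem_Icc.mp hk).1
        omega
      rw [hchebt k]
      simp only [hFun, if_neg hk0, if_neg hy1, if_pos hy2]
      rfl
    · -- |y| ≤ 1
      have hy : y ∈ Set.Icc (-1 : ℝ) 1 := ⟨by linarith, by linarith⟩
      set φ := Real.arccos y with hφ
      have hcosy : Real.cos φ = y := Real.cos_arccos hy.1 hy.2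
      set u := Complex.exp (φ * I) with hu'
      set e := Complex.exp (θ * I) with he'
      have hu : ‖u‖ ≤ 1 := le_of_eq (by rw [hu', Complex.norm_exp_ofReal_mul_I])
      have huu : u * (starRingEnd ℂ) u = 1 := by
        rw [Complex.mul_conj, Complex.normSq_eq_norm_sq, hu', Complex.norm_exp_ofReal_mul_I]
        norm_num
      have hee : e * (starRingEnd ℂ) e = 1 := by
        rw [Complex.mul_conj, Complex.normSq_eq_norm_sq, he', Complex.norm_exp_ofReal_mul_I]
        norm_num
      have hu2 : u + (starRingEnd ℂ) u = 2 * (y : ℂ) := by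
        rw [Complex.add_conj, hu', Complex.exp_ofReal_mul_I_re, hcosy]
        push_cast
        ring
      have he2 : e + (starRingEnd ℂ) e = 2 * (t : ℂ) := by
        rw [Complex.add_conj, he', Complex.exp_ofReal_mul_I_re, hcost]
        push_cast
        ring
      have key : (1 - e * u) * (1 - e * (starRingEnd ℂ) u) = 2 * ((t : ℂ) - (y : ℂ)) * e := by
        linear_combination e ^ 2 * huu - e * hu2 + e * he2 - hee
      have hne0 : (2 : ℂ) * ((t : ℂ) - (y : ℂ)) * e ≠ 0 := by
        apply mul_ne_zero (mul_ne_zero two_ne_zero _) (Complex.exp_ne_zero _)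
        rw [← Complex.ofReal_sub]
        exact Complex.ofReal_ne_zero.mpr (sub_ne_zero.mpr hty)
      have h1 : e * u ≠ 1 := fun h => hne0 (by rw [← key, h]; ring)
      have h2 : e * (starRingEnd ℂ) u ≠ 1 := fun h => hne0 (by rw [← key, h]; ring)
      have T := core θ u hu h1 h2
      rw [← he'] at T
      have habs : ‖(1 - e * u) * (1 - e * (starRingEnd ℂ) u)‖ = 2 * |t - y| := by
        rw [key, norm_mul, norm_mul, he', Complex.norm_exp_ofReal_mul_I, ← Complex.ofReal_sub,
          Complex.norm_real, Real.norm_eq_abs]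
        norm_num
      rw [habs] at T
      have hfin := (tendsto_const_nhds (x := Real.log 2 + hFun 0 y) (f := atTop)).add T
      have h0 : hFun 0 y = 0 := by
        simp [hFun, hy1, hy2]
      have hvalue : Real.log 2 + hFun 0 y + -Real.log (2 * |t - y|) = -Real.log |t - y| := by
        rw [h0, Real.log_mul two_ne_zero (abs_ne_zero.mpr (sub_ne_zero.mpr hty))]
        ring
      rw [hvalue] at hfin
      apply hfin.congr
      intro n
      congr 1
      apply Finset.sum_congr rfl
      intro k hk
      have hk0 : k ≠ 0 := by
        have := (Finset.mem_Icc.mp hk).1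
        omega
      have hure : (u ^ k).re = Real.cos (k * φ) := by
        rw [hu', ← Complex.exp_nat_mul, show (k : ℂ) * ((φ : ℂ) * I) = ((k * φ : ℝ) : ℂ) * I by
          push_cast; ring, Complex.exp_ofReal_mul_I_re]
      rw [hchebt k, hure]
      simp only [hFun, if_neg hk0, if_neg hy1, if_neg hy2]
      rw [hcheb hy k, hφ]

/-- The pointwise Chebyshev–Fourier expansion of `−∑_j log|x − x_j|`
(`= −log|det(H − xI)|` for a Hermitian matrix with eigenvalues `x_j`):
the series `∑_{k≥1} (∑_j h_k(x_j)) T_k(x)` converges and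
`−∑_j log|x − x_j| = N log 2 + ∑_j h₀(x_j) + ∑_{k≥1} (∑_j h_k(x_j)) T_k(x)`. -/
theorem stmt_13
    (N : ℕ) (hN : 1 ≤ N) (x : Fin N → ℝ)
    (t : ℝ) (ht : t ∈ Set.Icc (-1 : ℝ) 1) (htx : ∀ j, t ≠ x j) :
    Tendsto
      (fun n => (N : ℝ) * Real.log 2 + (∑ j, hFun 0 (x j))
        + ∑ k ∈ Finset.Icc 1 n, (∑ j, hFun k (x j)) * chebT k t)
      atTop
      (𝓝 (-∑ j, Real.log |t - x j|)) := by
  have h := tendsto_finset_sum (Finset.univ : Finset (Fin N))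
    (fun j _ => pointwise ht (htx j))
  have h2 : (∑ j, -Real.log |t - x j|) = -∑ j, Real.log |t - x j| :=
    Finset.sum_neg_distrib _
  rw [h2] at h
  apply h.congr
  intro n
  rw [Finset.sum_add_distrib, Finset.sum_add_distrib, Finset.sum_const, Finset.card_univ,
    Fintype.card_fin, nsmul_eq_mul]
  congr 1
  rw [Finset.sum_comm]
  apply Finset.sum_congr rfl
  intro k _
  rw [Finset.sum_mul]
end

section
/- For every ε > 0 and every t ∈ ℝ, ∫_0^∞ (e^{−εs}/s) · (1 − cos(ts)) ds = (1/2) · log( t²/ε² + 1 ). -/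
open MeasureTheory Real Filter Set

-- 1 - cos x ≤ |x|
lemma aux_one_sub_cos_le_abs (x : ℝ) : 1 - Real.cos x ≤ |x| := by
  have h1 : Real.sin (x / 2) ^ 2 = 1 / 2 - Real.cos x / 2 := by
    have := Real.cos_sq (x / 2)
    have h2 := Real.sin_sq_add_cos_sq (x / 2)
    rw [show 2 * (x / 2) = x by ring] at this
    nlinarith
  have h3 : Real.sin (x / 2) ^ 2 ≤ |x / 2| := by
    calc Real.sin (x / 2) ^ 2 = |Real.sin (x/2)| * |Real.sin (x/2)| := by
          rw [← sq_abs, sq]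
      _ ≤ 1 * |x/2| := by
          apply mul_le_mul (Real.abs_sin_le_one _) (Real.abs_sin_le_abs) (abs_nonneg _) zero_le_one
      _ = |x/2| := one_mul _
  have : |x / 2| = |x| / 2 := by rw [abs_div]; norm_num
  nlinarith

-- the sine integral
lemma aux_sin_integral (ε : ℝ) (hε : 0 < ε) (t : ℝ) :
    ∫ s in Set.Ioi (0:ℝ), Real.exp (-(ε * s)) * Real.sin (t * s) = t / (ε ^ 2 + t ^ 2) := by
  have hD : (0:ℝ) < ε ^ 2 + t ^ 2 := by positivity
  set D := ε ^ 2 + t ^ 2 with hDdef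
  set F : ℝ → ℝ := fun s =>
    -(Real.exp (-(ε * s)) * (ε * Real.sin (t * s) + t * Real.cos (t * s))) / D with hF
  have hderiv : ∀ s : ℝ, HasDerivAt F (Real.exp (-(ε * s)) * Real.sin (t * s)) s := by
    intro s
    have he : HasDerivAt (fun s : ℝ => Real.exp (-(ε * s))) (-ε * Real.exp (-(ε * s))) s := by
      have : HasDerivAt (fun s : ℝ => -(ε * s)) (-ε) s := by
        exact (((hasDerivAt_id s).const_mul ε).neg).congr_deriv (by simp)
      have h := (Real.hasDerivAt_exp (-(ε * s))).comp s this; exact h.congr_deriv (by ring)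
    have hts : HasDerivAt (fun s : ℝ => t * s) t s := by
      simpa using (hasDerivAt_id s).const_mul t
    have hsin : HasDerivAt (fun s : ℝ => Real.sin (t * s)) (Real.cos (t * s) * t) s :=
      (Real.hasDerivAt_sin (t * s)).comp s hts
    have hcos : HasDerivAt (fun s : ℝ => Real.cos (t * s)) (-Real.sin (t * s) * t) s :=
      (Real.hasDerivAt_cos (t * s)).comp s hts
    have h1 : HasDerivAt
        (fun s : ℝ => Real.exp (-(ε * s)) * (ε * Real.sin (t * s) + t * Real.cos (t * s)))
        ((-ε * Real.exp (-(ε * s))) * (ε * Real.sin (t * s) + t * Real.cos (t * s)) +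
          Real.exp (-(ε * s)) * (ε * (Real.cos (t * s) * t) + t * (-Real.sin (t * s) * t))) s :=
      he.mul ((hsin.const_mul ε).add (hcos.const_mul t))
    have := (h1.neg).div_const D
    refine this.congr_deriv ?_
    field_simp
    ring
  have hint : IntegrableOn (fun s => Real.exp (-(ε * s)) * Real.sin (t * s)) (Set.Ioi 0) := by
    have hg : IntegrableOn (fun s : ℝ => Real.exp (-ε * s)) (Set.Ioi 0) :=
      exp_neg_integrableOn_Ioi 0 hε
    refine Integrable.mono hg ((Continuous.mul (Real.continuous_exp.comp (by continuity))
        (Real.continuous_sin.comp (by continuity))).aestronglyMeasurable) ?_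
    filter_upwards with s
    rw [Real.norm_eq_abs, Real.norm_eq_abs, abs_mul, abs_of_pos (Real.exp_pos _),
      abs_of_pos (Real.exp_pos _)]
    calc Real.exp (-(ε*s)) * |Real.sin (t*s)| ≤ Real.exp (-(ε*s)) * 1 :=
          mul_le_mul_of_nonneg_left (Real.abs_sin_le_one _) (Real.exp_pos _).le
      _ = Real.exp (-ε * s) := by rw [mul_one]; ring_nf
  have htend : Tendsto F atTop (nhds 0) := by
    have hexp : Tendsto (fun s : ℝ => Real.exp (-(ε * s))) atTop (nhds 0) := by
      have h1 : Tendsto (fun s : ℝ => ε * s) atTop atTop :=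
        Tendsto.const_mul_atTop hε tendsto_id
      exact Real.tendsto_exp_neg_atTop_nhds_zero.comp h1
    have hbnd : ∀ s, ‖F s‖ ≤ (ε + |t|) / D * Real.exp (-(ε * s)) := by
      intro s
      rw [hF]
      simp only [Real.norm_eq_abs, abs_div, abs_neg, abs_mul]
      rw [abs_of_pos hD, abs_of_pos (Real.exp_pos _)]
      rw [div_mul_eq_mul_div, div_le_div_iff_of_pos_right hD]
      rw [mul_comm ((ε + |t|)) (Real.exp _)]
      apply mul_le_mul_of_nonneg_left ?_ (Real.exp_pos _).le
      calc |ε * Real.sin (t*s) + t * Real.cos (t*s)|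
          ≤ |ε * Real.sin (t*s)| + |t * Real.cos (t*s)| := abs_add_le _ _
        _ ≤ ε + |t| := by
            rw [abs_mul, abs_mul, abs_of_pos hε]
            have := Real.abs_sin_le_one (t*s)
            have := Real.abs_cos_le_one (t*s)
            nlinarith [abs_nonneg t, hε]
    exact squeeze_zero_norm hbnd (by simpa using hexp.const_mul ((ε + |t|) / D))
  have := integral_Ioi_of_hasDerivAt_of_tendsto' (f := F)
    (fun x _ => hderiv x) hint htend
  rw [this, hF]
  simp [Real.exp_zero]
  field_simp

lemma aux_integrable (ε : ℝ) (hε : 0 < ε) (t : ℝ) :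
    IntegrableOn (fun s => (Real.exp (-(ε * s)) / s) * (1 - Real.cos (t * s)))
      (Set.Ioi (0:ℝ)) := by
  have hg : IntegrableOn (fun s : ℝ => |t| * Real.exp (-ε * s)) (Set.Ioi 0) :=
    (exp_neg_integrableOn_Ioi 0 hε).const_mul _
  refine Integrable.mono hg ?_ ?_
  · apply ContinuousOn.aestronglyMeasurable ?_ measurableSet_Ioi
    apply ContinuousOn.mul
    · exact ContinuousOn.div (Real.continuous_exp.comp (by continuity)).continuousOn
        continuousOn_id (fun s hs => ne_of_gt hs)
    · exact (Continuous.sub continuous_const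
        (Real.continuous_cos.comp (by continuity))).continuousOn
  · filter_upwards [ae_restrict_mem measurableSet_Ioi] with s hs
    have hs : (0:ℝ) < s := hs
    have hc1 : Real.cos (t * s) ≤ 1 := Real.cos_le_one _
    have hc2 : 1 - Real.cos (t * s) ≤ |t * s| := aux_one_sub_cos_le_abs _
    rw [Real.norm_eq_abs, Real.norm_eq_abs, abs_mul, abs_div,
      abs_of_pos (Real.exp_pos _), abs_of_pos hs, abs_of_nonneg (by linarith),
      abs_mul, abs_abs, abs_of_pos (Real.exp_pos _)]
    have hc3 : 1 - Real.cos (t * s) ≤ |t| * s := by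
      rw [abs_mul, abs_of_pos hs] at hc2; exact hc2
    calc Real.exp (-(ε * s)) / s * (1 - Real.cos (t * s))
        ≤ Real.exp (-(ε * s)) / s * (|t| * s) :=
          mul_le_mul_of_nonneg_left hc3 (by positivity)
      _ = |t| * Real.exp (-ε * s) := by field_simp

lemma aux_hasDeriv (ε : ℝ) (hε : 0 < ε) (t : ℝ) :
    HasDerivAt (fun x : ℝ => ∫ s in Set.Ioi (0:ℝ),
        (Real.exp (-(ε * s)) / s) * (1 - Real.cos (x * s)))
      (t / (ε ^ 2 + t ^ 2)) t := by
  have key := hasDerivAt_integral_of_dominated_loc_of_deriv_le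
    (μ := volume.restrict (Set.Ioi (0:ℝ))) (x₀ := t)
    (F := fun x s => (Real.exp (-(ε * s)) / s) * (1 - Real.cos (x * s)))
    (F' := fun x s => Real.exp (-(ε * s)) * Real.sin (x * s))
    (bound := fun s => Real.exp (-(ε * s)))
    (Metric.ball_mem_nhds t one_pos)
    (Filter.Eventually.of_forall fun x => (aux_integrable ε hε x).aestronglyMeasurable)
    (aux_integrable ε hε t)
    ((Continuous.mul (Real.continuous_exp.comp (by continuity))
      (Real.continuous_sin.comp (by continuity))).aestronglyMeasurable)
    ?_ ?_ ?_
  · have heq : (∫ s in Set.Ioi (0:ℝ), Real.exp (-(ε * s)) * Real.sin (t * s))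
        = t / (ε ^ 2 + t ^ 2) := aux_sin_integral ε hε t
    rw [← heq]
    exact key.2
  · filter_upwards with s
    intro x _
    rw [Real.norm_eq_abs, abs_mul, abs_of_pos (Real.exp_pos _)]
    calc Real.exp (-(ε * s)) * |Real.sin (x * s)| ≤ Real.exp (-(ε * s)) * 1 :=
          mul_le_mul_of_nonneg_left (Real.abs_sin_le_one _) (Real.exp_pos _).le
      _ = Real.exp (-(ε * s)) := mul_one _
  · have hb : IntegrableOn (fun s : ℝ => Real.exp (-ε * s)) (Set.Ioi 0) :=
      exp_neg_integrableOn_Ioi 0 hε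
    simpa [neg_mul, IntegrableOn] using hb
  · filter_upwards [ae_restrict_mem measurableSet_Ioi] with s hs
    intro x _
    have hs : (0:ℝ) < s := hs
    have hxs : HasDerivAt (fun x : ℝ => x * s) s x := by
      simpa using (hasDerivAt_id x).mul_const s
    have hcos : HasDerivAt (fun x : ℝ => Real.cos (x * s)) (-Real.sin (x * s) * s) x :=
      by have h := (Real.hasDerivAt_cos (x * s)).comp x hxs; exact h
    have h1 : HasDerivAt (fun x : ℝ => 1 - Real.cos (x * s)) (Real.sin (x * s) * s) x := by
      simpa using hcos.const_sub 1
    have h2 := h1.const_mul (Real.exp (-(ε * s)) / s)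
    refine h2.congr_deriv ?_
    field_simp

/-- The Frullani-type integral: for `ε > 0` and `t ∈ ℝ`,
`∫_0^∞ (e^{−εs}/s)(1 − cos(ts)) ds = (1/2) log(t²/ε² + 1)`. -/
theorem stmt_15 (ε : ℝ) (hε : 0 < ε) (t : ℝ) :
    ∫ s in Set.Ioi (0 : ℝ), (Real.exp (-(ε * s)) / s) * (1 - Real.cos (t * s))
      = (1 / 2) * Real.log (t ^ 2 / ε ^ 2 + 1) := by
  set Φ : ℝ → ℝ := fun x => ∫ s in Set.Ioi (0:ℝ),
      (Real.exp (-(ε * s)) / s) * (1 - Real.cos (x * s)) with hΦ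
  have hG' : ∀ x : ℝ, HasDerivAt (fun y : ℝ => (1/2) * Real.log (y ^ 2 / ε ^ 2 + 1))
      (x / (ε ^ 2 + x ^ 2)) x := by
    intro x
    have hpos : (0:ℝ) < x ^ 2 / ε ^ 2 + 1 := by positivity
    have h1 : HasDerivAt (fun y : ℝ => y ^ 2 / ε ^ 2 + 1) (2 * x / ε ^ 2) x := by
      simpa using ((hasDerivAt_pow 2 x).div_const (ε ^ 2)).add_const 1
    have h2 := (Real.hasDerivAt_log (ne_of_gt hpos)).comp x h1
    have h3 := h2.const_mul (1/2 : ℝ)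
    refine h3.congr_deriv ?_
    field_simp
    ring
  have hzero : ∀ x : ℝ, HasDerivAt
      (fun y : ℝ => Φ y - (1/2) * Real.log (y ^ 2 / ε ^ 2 + 1)) 0 x := by
    intro x
    exact ((aux_hasDeriv ε hε x).sub (hG' x)).congr_deriv (by simp)
  have hconst := is_const_of_deriv_eq_zero
    (f := fun y : ℝ => Φ y - (1/2) * Real.log (y ^ 2 / ε ^ 2 + 1))
    (fun x => (hzero x).differentiableAt) (fun x => (hzero x).deriv) t 0
  have hΦ0 : Φ 0 = 0 := by
    rw [hΦ]
    simp
  have h0 : Φ 0 - (1/2) * Real.log ((0:ℝ) ^ 2 / ε ^ 2 + 1) = 0 := by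
    rw [hΦ0]; simp
  have := hconst
  rw [h0] at this
  have : Φ t = (1/2) * Real.log (t ^ 2 / ε ^ 2 + 1) := by linarith
  exact this
end

section
/- Let η > 0 and t ∈ ℝ. Then lim_{H → 0⁺} (1/2) ∫_0^∞ e^{−2ηs} · s^{−1−2H} · (1 − cos(ts)) ds = (1/4) · log( t²/(4η²) + 1 ). -/
open MeasureTheory Filter Topology
open Set Real

lemma intExpSin (a x : ℝ) (ha : 0 < a) :
    ∫ s in Set.Ioi (0:ℝ), Real.exp (-(a*s)) * Real.sin (x*s) = x / (a^2 + x^2) := by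
  have hax : 0 < a^2 + x^2 := by positivity
  set F : ℝ → ℝ := fun s =>
    -(Real.exp (-(a*s)) * (a * Real.sin (x*s) + x * Real.cos (x*s))) / (a^2+x^2) with hF
  have hlin : ∀ c s : ℝ, HasDerivAt (fun y : ℝ => c * y) c s := fun c s => by
    simpa using (hasDerivAt_id s).const_mul c
  have hderiv : ∀ s ∈ Set.Ioi (0:ℝ), HasDerivAt F (Real.exp (-(a*s)) * Real.sin (x*s)) s := by
    intro s _
    have hE : HasDerivAt (fun s : ℝ => Real.exp (-(a*s))) (Real.exp (-(a*s)) * (-a)) s :=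
      ((hlin a s).neg).exp
    have hsin : HasDerivAt (fun s : ℝ => Real.sin (x*s)) (Real.cos (x*s) * x) s :=
      (hlin x s).sin
    have hcos : HasDerivAt (fun s : ℝ => Real.cos (x*s)) (-Real.sin (x*s) * x) s :=
      (hlin x s).cos
    have hG : HasDerivAt (fun s : ℝ => a * Real.sin (x*s) + x * Real.cos (x*s))
        (a * (Real.cos (x*s) * x) + x * (-Real.sin (x*s) * x)) s :=
      (hsin.const_mul a).add (hcos.const_mul x)
    have h := ((hE.mul hG).neg).div_const (a^2+x^2)
    refine h.congr_deriv ?_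
    rw [div_eq_iff hax.ne']
    ring
  have hcont : ContinuousOn F (Set.Ici 0) := by
    apply Continuous.continuousOn; fun_prop
  have hint : IntegrableOn (fun s => Real.exp (-(a*s)) * Real.sin (x*s)) (Set.Ioi (0:ℝ)) := by
    apply Integrable.mono' (g := fun s => Real.exp (-a*s)) (exp_neg_integrableOn_Ioi 0 ha)
    · exact Continuous.aestronglyMeasurable (by fun_prop)
    · filter_upwards with s
      rw [norm_mul, Real.norm_eq_abs, Real.norm_eq_abs, Real.abs_exp, neg_mul]
      calc Real.exp (-(a*s)) * |Real.sin (x*s)| ≤ Real.exp (-(a*s)) * 1 := by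
            gcongr; exact abs_sin_le_one _
        _ = Real.exp (-(a*s)) := mul_one _
  have hexp0 : Tendsto (fun s : ℝ => Real.exp (-(a*s))) atTop (𝓝 0) := by
    apply Real.tendsto_exp_atBot.comp
    exact tendsto_neg_atBot_iff.mpr ((tendsto_const_mul_atTop_of_pos ha).mpr tendsto_id)
  have htend : Tendsto F atTop (𝓝 0) := by
    apply squeeze_zero_norm (f := F) (a := fun s => ((a + |x|)/(a^2+x^2)) * Real.exp (-(a*s)))
    · intro s
      have hb : |a * Real.sin (x*s) + x * Real.cos (x*s)| ≤ a + |x| := by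
        calc |a * Real.sin (x*s) + x * Real.cos (x*s)|
            ≤ |a * Real.sin (x*s)| + |x * Real.cos (x*s)| := abs_add_le _ _
          _ ≤ a * 1 + |x| * 1 := by
              rw [abs_mul, abs_mul, abs_of_pos ha]
              gcongr
              exacts [abs_sin_le_one _, abs_cos_le_one _]
          _ = a + |x| := by ring
      calc ‖F s‖ = Real.exp (-(a*s)) * |a * Real.sin (x*s) + x * Real.cos (x*s)| / (a^2+x^2) := by
            rw [hF]
            simp [abs_div, abs_mul, abs_of_pos hax, Real.abs_exp]
        _ ≤ Real.exp (-(a*s)) * (a + |x|) / (a^2+x^2) := by gcongr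
        _ = ((a + |x|)/(a^2+x^2)) * Real.exp (-(a*s)) := by ring
    · simpa using hexp0.const_mul ((a + |x|)/(a^2+x^2))
  rw [integral_Ioi_of_hasDerivAt_of_tendsto (hcont.continuousWithinAt (by simp)) hderiv hint htend]
  rw [hF]
  simp
  ring

lemma intOneSubCos (a b : ℝ) (ha : 0 < a) :
    ∫ s in Set.Ioi (0:ℝ), Real.exp (-(a*s)) * (1 - Real.cos (b*s)) / s
      = (1/2) * Real.log (1 + b^2/a^2) := by
  have ha2 : (0:ℝ) < a^2 := by positivity
  set f : ℝ → ℝ := fun b => ∫ s in Set.Ioi (0:ℝ), Real.exp (-(a*s)) * (1 - Real.cos (b*s)) / s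
    with hfdef
  have hmeas : ∀ b : ℝ, AEStronglyMeasurable
      (fun s => Real.exp (-(a*s)) * (1 - Real.cos (b*s)) / s)
      (volume.restrict (Set.Ioi (0:ℝ))) := by
    intro b
    apply Measurable.aestronglyMeasurable
    fun_prop
  have hIntS : IntegrableOn (fun s : ℝ => s * Real.exp (-(a*s))) (Set.Ioi (0:ℝ)) := by
    have := integrableOn_rpow_mul_exp_neg_mul_rpow (p := 1) (s := 1) (b := a)
      (by norm_num) one_pos ha
    apply this.congr_fun ?_ measurableSet_Ioi
    intro x hx
    simp [Real.rpow_one, neg_mul]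
  have hIntF : ∀ b : ℝ, IntegrableOn
      (fun s => Real.exp (-(a*s)) * (1 - Real.cos (b*s)) / s) (Set.Ioi (0:ℝ)) := by
    intro b
    apply Integrable.mono' (g := fun s => (b^2/2) * (s * Real.exp (-(a*s))))
      (hIntS.const_mul _) (hmeas b)
    filter_upwards [ae_restrict_mem measurableSet_Ioi] with s hs
    have hs0 : (0:ℝ) < s := hs
    have hcos : 0 ≤ 1 - Real.cos (b*s) := by
      nlinarith [Real.cos_le_one (b*s)]
    have hcos2 : 1 - Real.cos (b*s) ≤ (b*s)^2/2 := by
      nlinarith [Real.one_sub_sq_div_two_le_cos (x := b*s)]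
    rw [Real.norm_eq_abs, abs_div, abs_of_pos hs0, abs_mul, Real.abs_exp,
      abs_of_nonneg hcos, div_le_iff₀ hs0]
    calc Real.exp (-(a*s)) * (1 - Real.cos (b*s)) ≤ Real.exp (-(a*s)) * ((b*s)^2/2) := by
          gcongr
      _ = b^2/2 * (s * Real.exp (-(a*s))) * s := by ring
  have hderiv : ∀ b : ℝ, HasDerivAt f (b/(a^2+b^2)) b := by
    intro b
    have key := hasDerivAt_integral_of_dominated_loc_of_deriv_le
      (F := fun b s => Real.exp (-(a*s)) * (1 - Real.cos (b*s)) / s)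
      (F' := fun b s => Real.exp (-(a*s)) * Real.sin (b*s))
      (x₀ := b) (bound := fun s => Real.exp (-(a*s)))
      (μ := volume.restrict (Set.Ioi (0:ℝ))) (s := Metric.ball b 1) (Metric.ball_mem_nhds b one_pos)
      (Filter.Eventually.of_forall hmeas) (hIntF b)
      (Measurable.aestronglyMeasurable (by fun_prop))
      ?_ ?_ ?_
    · have := key.2
      rwa [intExpSin a b ha] at this
    · filter_upwards with s
      intro y _
      rw [Real.norm_eq_abs, abs_mul, Real.abs_exp]
      calc Real.exp (-(a*s)) * |Real.sin (y*s)| ≤ Real.exp (-(a*s)) * 1 := by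
            gcongr; exact Real.abs_sin_le_one _
        _ = _ := mul_one _
    · exact (exp_neg_integrableOn_Ioi 0 ha).congr_fun (fun x _ => by simp only [neg_mul])
        measurableSet_Ioi
    · filter_upwards [ae_restrict_mem measurableSet_Ioi] with s hs
      intro y _
      have hs0 : (0:ℝ) < s := hs
      have hlin : HasDerivAt (fun y : ℝ => y * s) s y := by
        simpa using (hasDerivAt_id y).mul_const s
      have hcos : HasDerivAt (fun y : ℝ => Real.cos (y*s)) (-Real.sin (y*s) * s) y := hlin.cos
      have h := (((hcos.const_sub 1).const_mul (Real.exp (-(a*s)))).div_const s)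
      refine h.congr_deriv ?_
      rw [div_eq_iff hs0.ne']
      ring
  have hg : ∀ b : ℝ, HasDerivAt (fun b : ℝ => (1/2) * Real.log (1 + b^2/a^2))
      (b/(a^2+b^2)) b := by
    intro b
    have hu : HasDerivAt (fun b : ℝ => 1 + b^2/a^2) (2*b/a^2) b := by
      have : HasDerivAt (fun b : ℝ => b^2) (2*b) b := by
        simpa using hasDerivAt_pow 2 b
      convert (this.div_const (a^2)).const_add 1 using 1
    have hpos : (0:ℝ) < 1 + b^2/a^2 := by positivity
    have h2 := (hu.log (ne_of_gt hpos)).const_mul (1/2 : ℝ)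
    refine h2.congr_deriv ?_
    have hab : a^2+b^2 ≠ 0 := by positivity
    field_simp
  have hconst : ∀ b : ℝ, f b - (1/2) * Real.log (1 + b^2/a^2) = f 0 - (1/2) * Real.log (1 + 0^2/a^2) := by
    intro b
    apply is_const_of_deriv_eq_zero (f := fun b => f b - (1/2) * Real.log (1 + b^2/a^2))
    · intro y
      exact ((hderiv y).sub (hg y)).differentiableAt
    · intro y
      have : HasDerivAt (fun b => f b - (1/2) * Real.log (1 + b^2/a^2)) 0 y := by
        refine ((hderiv y).sub (hg y)).congr_deriv ?_; simp
      exact this.deriv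
  have hf0 : f 0 = 0 := by
    rw [hfdef]
    simp
  have := hconst b
  rw [hf0] at this
  show f b = _
  simp at this
  linarith


/-- The `H → 0⁺` limit of the regularized fBm structure function:
`(1/2)∫_0^∞ e^{−2ηs} s^{−1−2H} (1 − cos(ts)) ds → (1/4) log(t²/(4η²) + 1)`. -/
theorem stmt_17 (η t : ℝ) (hη : 0 < η) :
    Tendsto
      (fun H : ℝ => (1 / 2) * ∫ s in Set.Ioi (0 : ℝ),
        Real.exp (-(2 * η * s)) * s ^ (-1 - 2 * H) * (1 - Real.cos (t * s)))
      (𝓝[>] 0)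
      (𝓝 ((1 / 4) * Real.log (t ^ 2 / (4 * η ^ 2) + 1))) := by
  have ha : (0:ℝ) < 2 * η := by linarith
  have hIntPow : ∀ p : ℝ, -1 < p →
      IntegrableOn (fun s : ℝ => s ^ p * Real.exp (-(2*η*s))) (Set.Ioi (0:ℝ)) := by
    intro p hp
    have := integrableOn_rpow_mul_exp_neg_mul_rpow (p := 1) (s := p) (b := 2*η) hp one_pos ha
    apply this.congr_fun ?_ measurableSet_Ioi
    intro x hx
    simp [Real.rpow_one, neg_mul]
  have hbound_int : Integrable
      (fun s => (t^2/2) * ((s ^ (1/2:ℝ) + s) * Real.exp (-(2*η*s))))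
      (volume.restrict (Set.Ioi (0:ℝ))) := by
    apply Integrable.const_mul
    have h1 := hIntPow (1/2) (by norm_num)
    have h2 := hIntPow 1 (by norm_num)
    have hsum : IntegrableOn
        (fun s : ℝ => s ^ (1/2:ℝ) * Real.exp (-(2*η*s)) + s ^ (1:ℝ) * Real.exp (-(2*η*s)))
        (Set.Ioi (0:ℝ)) := h1.add h2
    apply hsum.congr_fun ?_ measurableSet_Ioi
    intro x hx
    simp only [Real.rpow_one]
    ring
  have key : Tendsto
      (fun H : ℝ => ∫ s in Set.Ioi (0:ℝ),
        Real.exp (-(2*η*s)) * s ^ (-1 - 2*H) * (1 - Real.cos (t*s)))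
      (𝓝[>] (0:ℝ))
      (𝓝 (∫ s in Set.Ioi (0:ℝ), Real.exp (-(2*η*s)) * (1 - Real.cos (t*s)) / s)) := by
    apply tendsto_integral_filter_of_dominated_convergence
      (bound := fun s => (t^2/2) * ((s ^ (1/2:ℝ) + s) * Real.exp (-(2*η*s))))
    · filter_upwards with H
      apply Measurable.aestronglyMeasurable
      fun_prop
    · filter_upwards [Ioo_mem_nhdsGT (by norm_num : (0:ℝ) < 1/4)] with H hH
      filter_upwards [ae_restrict_mem measurableSet_Ioi] with s hs
      have hs0 : (0:ℝ) < s := hs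
      have hcos0 : 0 ≤ 1 - Real.cos (t*s) := by nlinarith [Real.cos_le_one (t*s)]
      have hcos2 : 1 - Real.cos (t*s) ≤ (t*s)^2/2 := by
        nlinarith [Real.one_sub_sq_div_two_le_cos (x := t*s)]
      have hrpow : s ^ (-1 - 2*H) * s^2 = s ^ (1 - 2*H) := by
        rw [← Real.rpow_natCast s 2, ← Real.rpow_add hs0]
        congr 1
        push_cast
        linarith
      have hple : s ^ (1 - 2*H) ≤ s ^ (1/2:ℝ) + s := by
        have hhalf : (0:ℝ) ≤ s ^ (1/2:ℝ) := Real.rpow_nonneg hs0.le _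
        rcases le_or_gt s 1 with h1 | h1
        · have h3 : s ^ (1 - 2*H) ≤ s ^ (1/2:ℝ) := by
            apply Real.rpow_le_rpow_of_exponent_ge hs0 h1
            have := hH.2; linarith
          linarith
        · have h3 : s ^ (1 - 2*H) ≤ s ^ (1:ℝ) := by
            apply Real.rpow_le_rpow_of_exponent_le h1.le
            have := hH.1; linarith
          rw [Real.rpow_one] at h3
          linarith
      have hsp : (0:ℝ) ≤ s ^ (-1 - 2*H) := Real.rpow_nonneg hs0.le _
      rw [Real.norm_eq_abs, abs_mul, abs_mul, Real.abs_exp, abs_of_nonneg hsp,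
        abs_of_nonneg hcos0]
      calc Real.exp (-(2*η*s)) * s ^ (-1 - 2*H) * (1 - Real.cos (t*s))
          ≤ Real.exp (-(2*η*s)) * s ^ (-1 - 2*H) * ((t*s)^2/2) := by
            apply mul_le_mul_of_nonneg_left hcos2
            positivity
        _ = (t^2/2) * ((s ^ (-1 - 2*H) * s^2) * Real.exp (-(2*η*s))) := by ring
        _ = (t^2/2) * (s ^ (1 - 2*H) * Real.exp (-(2*η*s))) := by rw [hrpow]
        _ ≤ (t^2/2) * ((s ^ (1/2:ℝ) + s) * Real.exp (-(2*η*s))) := by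
            apply mul_le_mul_of_nonneg_left ?_ (by positivity)
            apply mul_le_mul_of_nonneg_right hple (Real.exp_nonneg _)
    · exact hbound_int
    · filter_upwards [ae_restrict_mem measurableSet_Ioi] with s hs
      have hs0 : (0:ℝ) < s := hs
      have hc : ContinuousAt (fun H : ℝ => s ^ (-1 - 2*H)) 0 := by
        have heq : (fun H : ℝ => s ^ (-1 - 2*H))
            = fun H => Real.exp (Real.log s * (-1 - 2*H)) := by
          funext H
          rw [Real.rpow_def_of_pos hs0]
        rw [heq]
        fun_prop
      have h1 : Tendsto (fun H : ℝ => s ^ (-1 - 2*H)) (𝓝[>] (0:ℝ)) (𝓝 (s ^ (-1 - 2*(0:ℝ)))) :=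
        hc.tendsto.mono_left nhdsWithin_le_nhds
      have h2 := (h1.const_mul (Real.exp (-(2*η*s)))).mul_const (1 - Real.cos (t*s))
      convert h2 using 2
      rw [show (-1 - 2*(0:ℝ)) = (-1:ℝ) by norm_num, Real.rpow_neg_one]
      field_simp
  have key2 := key.const_mul (1/2 : ℝ)
  rw [intOneSubCos (2*η) t ha] at key2
  convert key2 using 2
  rw [show ((2:ℝ)*η)^2 = 4*η^2 by ring]
  ring
end

section
/- For every integer k ≥ 1, ∫_{−1}^{1} ∫_{−1}^{1} ( (T_k(x) − T_k(y)) / (x − y) )² · (1 − x²)^{−1/2} · (1 − y²)^{−1/2} dx dy = k² π². In particular, (1/(2k²)) times this double integral is bounded uniformly in k. -/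
open MeasureTheory

open Real intervalIntegral Finset Set


noncomputable def Sk (k : ℕ) (t : ℝ) : ℝ :=
  ∑ p ∈ Finset.range k, Real.cos (((k:ℝ) - 1 - 2*p) * t)

lemma sin_mul_Sk (k : ℕ) (t : ℝ) : Real.sin t * Sk k t = Real.sin (k * t) := by
  have h : ∀ p : ℕ, Real.sin t * Real.cos (((k:ℝ) - 1 - 2*p) * t)
      = Real.sin (((k:ℝ) - 2*p) * t) / 2 - Real.sin (((k:ℝ) - 2*(p+1:ℕ)) * t) / 2 := by
    intro p
    have e1 : ((k:ℝ) - 2*p) * t = ((k:ℝ) - 1 - 2*p) * t + t := by push_cast; ring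
    have e2 : ((k:ℝ) - 2*(p+1:ℕ)) * t = ((k:ℝ) - 1 - 2*p) * t - t := by push_cast; ring
    rw [e1, e2, Real.sin_add, Real.sin_sub]
    ring
  rw [Sk, Finset.mul_sum]
  simp only [h]
  rw [Finset.sum_range_sub' (fun p : ℕ => Real.sin (((k:ℝ) - 2*p) * t) / 2)]
  have e3 : ((k:ℝ) - 2*(k:ℕ)) * t = -((k:ℝ)*t) := by push_cast; ring
  simp [e3, Real.sin_neg]
  ring

lemma keyId (k : ℕ) (θ φ : ℝ) :
    Real.cos ((k:ℝ)*θ) - Real.cos ((k:ℝ)*φ)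
      = Sk k ((θ+φ)/2) * Sk k ((θ-φ)/2) * (Real.cos θ - Real.cos φ) := by
  rw [Real.cos_sub_cos ((k:ℝ)*θ) ((k:ℝ)*φ), Real.cos_sub_cos θ φ]
  have e1 : ((k:ℝ)*θ + (k:ℝ)*φ)/2 = (k:ℝ) * ((θ+φ)/2) := by ring
  have e2 : ((k:ℝ)*θ - (k:ℝ)*φ)/2 = (k:ℝ) * ((θ-φ)/2) := by ring
  rw [e1, e2, ← sin_mul_Sk k ((θ+φ)/2), ← sin_mul_Sk k ((θ-φ)/2)]
  ring


lemma cos_image_Ioo : Real.cos '' Set.Ioo 0 π = Set.Ioo (-1 : ℝ) 1 := by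
  apply Set.Subset.antisymm
  · rintro y ⟨θ, hθ, rfl⟩
    constructor
    · have h := Real.cos_lt_cos_of_nonneg_of_le_pi (le_of_lt hθ.1) le_rfl hθ.2
      simpa using h
    · have h := Real.cos_lt_cos_of_nonneg_of_le_pi le_rfl hθ.2.le hθ.1
      simpa using h
  · intro y hy
    refine ⟨Real.arccos y, ⟨Real.arccos_pos.2 hy.2, ?_⟩, Real.cos_arccos hy.1.le hy.2.le⟩
    have := Real.arccos_le_pi y
    rcases lt_or_eq_of_le this with h | h
    · exact h
    · exfalso
      have : Real.cos (Real.arccos y) = -1 := by rw [h]; simp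
      rw [Real.cos_arccos hy.1.le hy.2.le] at this
      linarith [hy.1]

/-- Substitution `y = cos θ`. -/
lemma SUB (F : ℝ → ℝ) :
    (∫ y in (-1 : ℝ)..1, F y * (Real.sqrt (1 - y ^ 2))⁻¹)
      = ∫ θ in (0 : ℝ)..π, F (Real.cos θ) := by
  have h1 : (∫ y in (-1 : ℝ)..1, F y * (Real.sqrt (1 - y ^ 2))⁻¹)
      = ∫ y in Set.Ioo (-1:ℝ) 1, F y * (Real.sqrt (1 - y ^ 2))⁻¹ := by
    rw [intervalIntegral.integral_of_le (by norm_num : (-1:ℝ) ≤ 1),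
      MeasureTheory.integral_Ioc_eq_integral_Ioo]
  have h2 : (∫ θ in (0:ℝ)..π, F (Real.cos θ))
      = ∫ θ in Set.Ioo (0:ℝ) π, F (Real.cos θ) := by
    rw [intervalIntegral.integral_of_le Real.pi_pos.le,
      MeasureTheory.integral_Ioc_eq_integral_Ioo]
  rw [h1, h2, ← cos_image_Ioo,
    MeasureTheory.integral_image_eq_integral_abs_deriv_smul measurableSet_Ioo
      (f' := fun θ => -Real.sin θ)
      (fun θ _ => (Real.hasDerivAt_cos θ).hasDerivWithinAt)
      (Real.injOn_cos.mono (Set.Ioo_subset_Icc_self))]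
  apply MeasureTheory.setIntegral_congr_fun measurableSet_Ioo
  intro θ hθ
  have hs : 0 < Real.sin θ := Real.sin_pos_of_pos_of_lt_pi hθ.1 hθ.2
  have hsq : Real.sqrt (1 - Real.cos θ ^ 2) = Real.sin θ := by
    rw [show (1 : ℝ) - Real.cos θ ^ 2 = Real.sin θ ^ 2 by
      have := Real.sin_sq_add_cos_sq θ; linarith]
    exact Real.sqrt_sq hs.le
  simp only [smul_eq_mul, abs_neg, abs_of_pos hs, hsq]
  field_simp


lemma int_cos_lin (a c : ℝ) (ha : a ≠ 0) :
    (∫ x in (0:ℝ)..π, Real.cos (a * x + c)) = (Real.sin (a * π + c) - Real.sin c) / a := by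
  have h : ∀ x : ℝ, HasDerivAt (fun x => Real.sin (a * x + c) / a) (Real.cos (a * x + c)) x := by
    intro x
    have h1 : HasDerivAt (fun x : ℝ => a * x + c) a x := by
      simpa using ((hasDerivAt_id x).const_mul a).add_const c
    have := (Real.hasDerivAt_sin (a * x + c)).comp x h1
    have h2 := this.div_const a
    simpa [mul_comm, mul_div_assoc, mul_div_cancel_left₀ _ ha] using h2
  rw [intervalIntegral.integral_eq_sub_of_hasDerivAt (fun x _ => h x)
    ((Real.continuous_cos.comp (by continuity)).intervalIntegrable 0 π)]
  simp [div_sub_div_same]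

lemma int_sin_lin (a : ℝ) (ha : a ≠ 0) :
    (∫ x in (0:ℝ)..π, Real.sin (a * x)) = (1 - Real.cos (a * π)) / a := by
  have h : ∀ x : ℝ, HasDerivAt (fun x => -Real.cos (a * x) / a) (Real.sin (a * x)) x := by
    intro x
    have h1 : HasDerivAt (fun x : ℝ => a * x) a x := by
      simpa using ((hasDerivAt_id x).const_mul a)
    have := ((Real.hasDerivAt_cos (a * x)).comp x h1).neg.div_const a
    simpa [mul_comm, mul_div_assoc, mul_div_cancel_left₀ _ ha] using this
  rw [intervalIntegral.integral_eq_sub_of_hasDerivAt (fun x _ => h x)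
    ((Real.continuous_sin.comp (by continuity)).intervalIntegrable 0 π)]
  simp
  ring_nf

lemma cos_int_pi (M : ℤ) : Real.cos ((M:ℝ) * π) = (-1:ℝ) ^ M := by
  have := Real.cos_int_mul_pi_sub 0 M
  simpa using this

lemma Eval (M N : ℤ) :
    (∫ θ in (0:ℝ)..π, ∫ φ in (0:ℝ)..π, Real.cos ((M:ℝ) * θ + (N:ℝ) * φ))
      = if M = 0 ∧ N = 0 then π^2
        else (((-1:ℝ)^N - 1)/(N:ℝ)) * ((1 - (-1:ℝ)^M)/(M:ℝ)) := by
  by_cases hN : N = 0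
  · subst hN
    have hinner : ∀ θ : ℝ, (∫ φ in (0:ℝ)..π, Real.cos ((M:ℝ) * θ + (0:ℤ) * φ))
        = π * Real.cos ((M:ℝ) * θ) := by
      intro θ
      simp [intervalIntegral.integral_const]
    simp only [hinner]
    by_cases hM : M = 0
    · subst hM; simp [sq]
    · have hMr : (M:ℝ) ≠ 0 := Int.cast_ne_zero.mpr hM
      have hint : (∫ x in (0:ℝ)..π, Real.cos ((M:ℝ) * x)) = 0 := by
        have h0 := int_cos_lin (M:ℝ) 0 hMr
        have : Real.sin ((M:ℝ) * π + 0) = 0 := by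
          simpa using Real.sin_int_mul_pi M
        rw [this] at h0
        simpa using h0
      rw [intervalIntegral.integral_const_mul, hint]
      simp [hM]
  · have hNr : (N:ℝ) ≠ 0 := Int.cast_ne_zero.mpr hN
    have hinner : ∀ θ : ℝ, (∫ φ in (0:ℝ)..π, Real.cos ((M:ℝ) * θ + (N:ℝ) * φ))
        = ((-1:ℝ)^N - 1)/(N:ℝ) * Real.sin ((M:ℝ) * θ) := by
      intro θ
      have harg : ∀ φ : ℝ, (M:ℝ) * θ + (N:ℝ) * φ = (N:ℝ) * φ + (M:ℝ) * θ := fun φ => by ring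
      simp only [harg]
      rw [int_cos_lin (N:ℝ) ((M:ℝ)*θ) hNr]
      rw [show (N:ℝ) * π + (M:ℝ)*θ = (M:ℝ)*θ + (N:ℤ) * π by push_cast; ring,
        Real.sin_add_int_mul_pi]
      ring
    simp only [hinner]
    rw [intervalIntegral.integral_const_mul]
    by_cases hM : M = 0
    · subst hM; simp [hN]
    · have hMr : (M:ℝ) ≠ 0 := Int.cast_ne_zero.mpr hM
      rw [int_sin_lin (M:ℝ) hMr, cos_int_pi M]
      simp [hN, hM]

lemma c2s (X Y : ℝ) : Real.cos X * Real.cos Y = (Real.cos (X+Y) + Real.cos (X-Y))/2 := by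
  rw [Real.cos_add, Real.cos_sub]; ring

lemma inner_closed (M N : ℤ) (θ : ℝ) :
    (∫ φ in (0:ℝ)..π, Real.cos ((M:ℝ) * θ + (N:ℝ) * φ))
      = if N = 0 then π * Real.cos ((M:ℝ) * θ)
        else ((-1:ℝ)^N - 1)/(N:ℝ) * Real.sin ((M:ℝ) * θ) := by
  by_cases hN : N = 0
  · subst hN; simp [intervalIntegral.integral_const]
  · have hNr : (N:ℝ) ≠ 0 := Int.cast_ne_zero.mpr hN
    have harg : ∀ φ : ℝ, (M:ℝ) * θ + (N:ℝ) * φ = (N:ℝ) * φ + (M:ℝ) * θ := fun φ => by ring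
    simp only [harg]
    rw [int_cos_lin (N:ℝ) ((M:ℝ)*θ) hNr]
    rw [show (N:ℝ) * π + (M:ℝ)*θ = (M:ℝ)*θ + (N:ℤ) * π by push_cast ; ring,
      Real.sin_add_int_mul_pi]
    simp [hN]
    ring

lemma innerInt (M N : ℤ) :
    IntervalIntegrable (fun θ => ∫ φ in (0:ℝ)..π, Real.cos ((M:ℝ) * θ + (N:ℝ) * φ))
      volume 0 π := by
  have : (fun θ => ∫ φ in (0:ℝ)..π, Real.cos ((M:ℝ) * θ + (N:ℝ) * φ))
      = fun θ => (if N = 0 then π * Real.cos ((M:ℝ) * θ)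
        else ((-1:ℝ)^N - 1)/(N:ℝ) * Real.sin ((M:ℝ) * θ)) := by
    funext θ; exact inner_closed M N θ
  rw [this]
  by_cases hN : N = 0 <;> simp [hN] <;> apply Continuous.intervalIntegrable <;> continuity

lemma contcos (M N : ℤ) (θ : ℝ) : IntervalIntegrable
    (fun φ => Real.cos ((M:ℝ) * θ + (N:ℝ) * φ)) volume 0 π := by
  apply Continuous.intervalIntegrable; continuity

lemma zpow_neg_one_neg (N : ℤ) : ((-1:ℝ))^(-N) = ((-1:ℝ))^N := by
  rw [zpow_neg]
  rcases Int.even_or_odd N with h | h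
  · rw [h.neg_one_zpow]; norm_num
  · rw [h.neg_one_zpow]; norm_num

lemma Vsym (m n : ℤ) :
    (∫ θ in (0:ℝ)..π, ∫ φ in (0:ℝ)..π,
        (Real.cos ((m:ℝ)*(θ+φ)) * Real.cos ((n:ℝ)*(θ-φ))
          + Real.cos ((n:ℝ)*(θ+φ)) * Real.cos ((m:ℝ)*(θ-φ))))
      = if m = 0 ∧ n = 0 then 2*π^2 else 0 := by
  set M := m + n with hM
  set N := m - n with hN
  have hpt : ∀ θ φ : ℝ,
      (Real.cos ((m:ℝ)*(θ+φ)) * Real.cos ((n:ℝ)*(θ-φ))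
        + Real.cos ((n:ℝ)*(θ+φ)) * Real.cos ((m:ℝ)*(θ-φ)))
      = (Real.cos ((M:ℝ) * θ + (N:ℝ) * φ) + Real.cos ((N:ℝ) * θ + (M:ℝ) * φ)
        + (Real.cos ((M:ℝ) * θ + ((-N:ℤ):ℝ) * φ) + Real.cos (((-N:ℤ):ℝ) * θ + (M:ℝ) * φ)))/2 := by
    intro θ φ
    rw [c2s, c2s]
    rw [show (m:ℝ)*(θ+φ) + (n:ℝ)*(θ-φ) = (M:ℝ) * θ + (N:ℝ) * φ by rw [hM, hN]; push_cast; ring,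
      show (m:ℝ)*(θ+φ) - (n:ℝ)*(θ-φ) = (N:ℝ) * θ + (M:ℝ) * φ by rw [hM, hN]; push_cast; ring,
      show (n:ℝ)*(θ+φ) + (m:ℝ)*(θ-φ) = (M:ℝ) * θ + ((-N:ℤ):ℝ) * φ by rw [hM, hN]; push_cast; ring,
      show (n:ℝ)*(θ+φ) - (m:ℝ)*(θ-φ) = ((-N:ℤ):ℝ) * θ + (M:ℝ) * φ by rw [hM, hN]; push_cast; ring]
    ring
  have hinner : ∀ θ : ℝ,
      (∫ φ in (0:ℝ)..π,
        (Real.cos ((m:ℝ)*(θ+φ)) * Real.cos ((n:ℝ)*(θ-φ))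
          + Real.cos ((n:ℝ)*(θ+φ)) * Real.cos ((m:ℝ)*(θ-φ))))
      = ((∫ φ in (0:ℝ)..π, Real.cos ((M:ℝ) * θ + (N:ℝ) * φ))
        + (∫ φ in (0:ℝ)..π, Real.cos ((N:ℝ) * θ + (M:ℝ) * φ))
        + ((∫ φ in (0:ℝ)..π, Real.cos ((M:ℝ) * θ + ((-N:ℤ):ℝ) * φ))
        + (∫ φ in (0:ℝ)..π, Real.cos (((-N:ℤ):ℝ) * θ + (M:ℝ) * φ))))/2 := by
    intro θ
    rw [show (fun φ => (Real.cos ((m:ℝ)*(θ+φ)) * Real.cos ((n:ℝ)*(θ-φ))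
          + Real.cos ((n:ℝ)*(θ+φ)) * Real.cos ((m:ℝ)*(θ-φ))))
        = fun φ => (Real.cos ((M:ℝ) * θ + (N:ℝ) * φ) + Real.cos ((N:ℝ) * θ + (M:ℝ) * φ)
        + (Real.cos ((M:ℝ) * θ + ((-N:ℤ):ℝ) * φ) + Real.cos (((-N:ℤ):ℝ) * θ + (M:ℝ) * φ)))/2
      from funext (fun φ => hpt θ φ)]
    rw [intervalIntegral.integral_div]
    rw [intervalIntegral.integral_add (((contcos M N θ).add (contcos N M θ)))
        ((contcos M (-N) θ).add (contcos (-N) M θ)),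
      intervalIntegral.integral_add (contcos M N θ) (contcos N M θ),
      intervalIntegral.integral_add (contcos M (-N) θ) (contcos (-N) M θ)]
  rw [intervalIntegral.integral_congr (fun θ _ => hinner θ)]
  rw [intervalIntegral.integral_div,
    intervalIntegral.integral_add ((innerInt M N).add (innerInt N M))
      ((innerInt M (-N)).add (innerInt (-N) M)),
    intervalIntegral.integral_add (innerInt M N) (innerInt N M),
    intervalIntegral.integral_add (innerInt M (-N)) (innerInt (-N) M)]
  rw [Eval M N, Eval N M, Eval M (-N), Eval (-N) M]
  by_cases h : m = 0 ∧ n = 0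
  · obtain ⟨rfl, rfl⟩ := h
    norm_num [hM, hN]
    ring
  · have h1 : ¬ (M = 0 ∧ N = 0) := by
      rintro ⟨h1, h2⟩; exact h ⟨by omega, by omega⟩
    have h2 : ¬ (N = 0 ∧ M = 0) := fun ⟨a, b⟩ => h1 ⟨b, a⟩
    have h3 : ¬ (M = 0 ∧ -N = 0) := by rintro ⟨a, b⟩; exact h1 ⟨a, by omega⟩
    have h4 : ¬ (-N = 0 ∧ M = 0) := by rintro ⟨a, b⟩; exact h1 ⟨b, by omega⟩
    rw [if_neg h1, if_neg h2, if_neg h3, if_neg h4, if_neg h]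
    rw [zpow_neg_one_neg N]
    push_cast
    by_cases hNz : N = 0
    · rw [hNz]; simp
    · have : (N:ℝ) ≠ 0 := Int.cast_ne_zero.mpr hNz
      field_simp
      ring

lemma Cinner (m n : ℤ) (θ : ℝ) :
    (∫ φ in (0:ℝ)..π, Real.cos ((m:ℝ)*(θ+φ)) * Real.cos ((n:ℝ)*(θ-φ)))
      = ((∫ φ in (0:ℝ)..π, Real.cos (((m+n:ℤ):ℝ) * θ + ((m-n:ℤ):ℝ) * φ))
        + (∫ φ in (0:ℝ)..π, Real.cos (((m-n:ℤ):ℝ) * θ + ((m+n:ℤ):ℝ) * φ)))/2 := by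
  rw [show (fun φ => Real.cos ((m:ℝ)*(θ+φ)) * Real.cos ((n:ℝ)*(θ-φ)))
      = fun φ => (Real.cos (((m+n:ℤ):ℝ) * θ + ((m-n:ℤ):ℝ) * φ)
          + Real.cos (((m-n:ℤ):ℝ) * θ + ((m+n:ℤ):ℝ) * φ))/2
    from funext (fun φ => by
      rw [c2s,
        show (m:ℝ)*(θ+φ) + (n:ℝ)*(θ-φ) = ((m+n:ℤ):ℝ) * θ + ((m-n:ℤ):ℝ) * φ by push_cast; ring,
        show (m:ℝ)*(θ+φ) - (n:ℝ)*(θ-φ) = ((m-n:ℤ):ℝ) * θ + ((m+n:ℤ):ℝ) * φ by push_cast; ring])]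
  rw [intervalIntegral.integral_div,
    intervalIntegral.integral_add (contcos (m+n) (m-n) θ) (contcos (m-n) (m+n) θ)]

lemma contCt (m n : ℤ) (θ : ℝ) : IntervalIntegrable
    (fun φ => Real.cos ((m:ℝ)*(θ+φ)) * Real.cos ((n:ℝ)*(θ-φ))) volume 0 π := by
  apply Continuous.intervalIntegrable; continuity

lemma CtInt (m n : ℤ) : IntervalIntegrable
    (fun θ => ∫ φ in (0:ℝ)..π, Real.cos ((m:ℝ)*(θ+φ)) * Real.cos ((n:ℝ)*(θ-φ)))
    volume 0 π := by
  rw [show (fun θ => ∫ φ in (0:ℝ)..π, Real.cos ((m:ℝ)*(θ+φ)) * Real.cos ((n:ℝ)*(θ-φ)))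
      = fun θ => ((∫ φ in (0:ℝ)..π, Real.cos (((m+n:ℤ):ℝ) * θ + ((m-n:ℤ):ℝ) * φ))
        + (∫ φ in (0:ℝ)..π, Real.cos (((m-n:ℤ):ℝ) * θ + ((m+n:ℤ):ℝ) * φ)))/2
    from funext (Cinner m n)]
  exact ((innerInt (m+n) (m-n)).add (innerInt (m-n) (m+n))).div_const 2


noncomputable def Vform (m n : ℤ) : ℝ :=
  (if m + n = 0 ∧ m - n = 0 then π^2
      else (((-1:ℝ)^(m-n) - 1)/((m-n:ℤ):ℝ)) * ((1 - (-1:ℝ)^(m+n))/((m+n:ℤ):ℝ)))/2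
  + (if m - n = 0 ∧ m + n = 0 then π^2
      else (((-1:ℝ)^(m+n) - 1)/((m+n:ℤ):ℝ)) * ((1 - (-1:ℝ)^(m-n))/((m-n:ℤ):ℝ)))/2

lemma Cval (m n : ℤ) :
    (∫ θ in (0:ℝ)..π, ∫ φ in (0:ℝ)..π,
        Real.cos ((m:ℝ)*(θ+φ)) * Real.cos ((n:ℝ)*(θ-φ)))
      = Vform m n := by
  rw [intervalIntegral.integral_congr (fun θ _ => Cinner m n θ)]
  rw [intervalIntegral.integral_div,
    intervalIntegral.integral_add (innerInt (m+n) (m-n)) (innerInt (m-n) (m+n)),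
    Eval (m+n) (m-n), Eval (m-n) (m+n), Vform]
  ring

lemma Cpair (m n : ℤ) :
    Vform m n + Vform n m = if m = 0 ∧ n = 0 then 2*π^2 else 0 := by
  rw [Vform, Vform]
  by_cases h : m = 0 ∧ n = 0
  · obtain ⟨rfl, rfl⟩ := h
    norm_num
    ring
  · have h1 : ¬ (m + n = 0 ∧ m - n = 0) := by rintro ⟨a, b⟩; exact h ⟨by omega, by omega⟩
    have h2 : ¬ (m - n = 0 ∧ m + n = 0) := fun ⟨a, b⟩ => h1 ⟨b, a⟩
    have h3 : ¬ (n + m = 0 ∧ n - m = 0) := by rintro ⟨a, b⟩; exact h ⟨by omega, by omega⟩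
    have h4 : ¬ (n - m = 0 ∧ n + m = 0) := fun ⟨a, b⟩ => h3 ⟨b, a⟩
    rw [if_neg h1, if_neg h2, if_neg h3, if_neg h4, if_neg h]
    have e1 : n + m = m + n := by ring
    have e2 : n - m = -(m - n) := by ring
    rw [e1, e2, zpow_neg_one_neg (m - n)]
    push_cast
    simp only [div_neg, neg_div]
    ring

def m1 (k p q : ℕ) : ℤ := (k:ℤ) - 1 - p - q
def m2 (p q : ℕ) : ℤ := (q:ℤ) - p
noncomputable def indR (x : ℤ) : ℝ := if x = 0 then 1 else 0

lemma pairSum (k p q : ℕ) (w : ℝ) :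
    Real.cos (((k:ℝ) - 1 - 2*p) * (w/2)) * Real.cos (((k:ℝ) - 1 - 2*q) * (w/2))
      = (Real.cos ((m1 k p q : ℝ) * w) + Real.cos ((m2 p q : ℝ) * w))/2 := by
  rw [c2s,
    show ((k:ℝ) - 1 - 2*p) * (w/2) + ((k:ℝ) - 1 - 2*q) * (w/2) = (m1 k p q : ℝ) * w by
      unfold m1; push_cast; ring,
    show ((k:ℝ) - 1 - 2*p) * (w/2) - ((k:ℝ) - 1 - 2*q) * (w/2) = (m2 p q : ℝ) * w by
      unfold m2; push_cast; ring]

lemma Cpair' (m n : ℤ) : Vform m n + Vform n m = 2*π^2 * (indR m * indR n) := by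
  rw [Cpair]
  unfold indR
  by_cases hm : m = 0 <;> by_cases hn : n = 0 <;> simp [hm, hn]

/-- The per-term double integral. -/
lemma Tval (k p q r s : ℕ) :
    (∫ θ in (0:ℝ)..π, ∫ φ in (0:ℝ)..π,
        (Real.cos (((k:ℝ) - 1 - 2*p) * ((θ+φ)/2)) * Real.cos (((k:ℝ) - 1 - 2*q) * ((θ+φ)/2)))
          * (Real.cos (((k:ℝ) - 1 - 2*r) * ((θ-φ)/2)) * Real.cos (((k:ℝ) - 1 - 2*s) * ((θ-φ)/2))))
      = (Vform (m1 k p q) (m1 k r s) + Vform (m1 k p q) (m2 r s)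
          + Vform (m2 p q) (m1 k r s) + Vform (m2 p q) (m2 r s))/4 := by
  have hpt : ∀ θ φ : ℝ,
      (Real.cos (((k:ℝ) - 1 - 2*p) * ((θ+φ)/2)) * Real.cos (((k:ℝ) - 1 - 2*q) * ((θ+φ)/2)))
        * (Real.cos (((k:ℝ) - 1 - 2*r) * ((θ-φ)/2)) * Real.cos (((k:ℝ) - 1 - 2*s) * ((θ-φ)/2)))
      = (Real.cos ((m1 k p q : ℝ)*(θ+φ)) * Real.cos ((m1 k r s : ℝ)*(θ-φ))
        + Real.cos ((m1 k p q : ℝ)*(θ+φ)) * Real.cos ((m2 r s : ℝ)*(θ-φ))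
        + (Real.cos ((m2 p q : ℝ)*(θ+φ)) * Real.cos ((m1 k r s : ℝ)*(θ-φ))
        + Real.cos ((m2 p q : ℝ)*(θ+φ)) * Real.cos ((m2 r s : ℝ)*(θ-φ))))/4 := by
    intro θ φ
    rw [pairSum k p q (θ+φ), pairSum k r s (θ-φ)]
    ring
  have hinner : ∀ θ : ℝ,
      (∫ φ in (0:ℝ)..π,
        (Real.cos (((k:ℝ) - 1 - 2*p) * ((θ+φ)/2)) * Real.cos (((k:ℝ) - 1 - 2*q) * ((θ+φ)/2)))
          * (Real.cos (((k:ℝ) - 1 - 2*r) * ((θ-φ)/2)) * Real.cos (((k:ℝ) - 1 - 2*s) * ((θ-φ)/2))))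
      = ((∫ φ in (0:ℝ)..π, Real.cos ((m1 k p q : ℝ)*(θ+φ)) * Real.cos ((m1 k r s : ℝ)*(θ-φ)))
        + (∫ φ in (0:ℝ)..π, Real.cos ((m1 k p q : ℝ)*(θ+φ)) * Real.cos ((m2 r s : ℝ)*(θ-φ)))
        + ((∫ φ in (0:ℝ)..π, Real.cos ((m2 p q : ℝ)*(θ+φ)) * Real.cos ((m1 k r s : ℝ)*(θ-φ)))
        + (∫ φ in (0:ℝ)..π, Real.cos ((m2 p q : ℝ)*(θ+φ)) * Real.cos ((m2 r s : ℝ)*(θ-φ)))))/4 := by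
    intro θ
    rw [show (fun φ =>
        (Real.cos (((k:ℝ) - 1 - 2*p) * ((θ+φ)/2)) * Real.cos (((k:ℝ) - 1 - 2*q) * ((θ+φ)/2)))
          * (Real.cos (((k:ℝ) - 1 - 2*r) * ((θ-φ)/2)) * Real.cos (((k:ℝ) - 1 - 2*s) * ((θ-φ)/2))))
        = fun φ => (Real.cos ((m1 k p q : ℝ)*(θ+φ)) * Real.cos ((m1 k r s : ℝ)*(θ-φ))
        + Real.cos ((m1 k p q : ℝ)*(θ+φ)) * Real.cos ((m2 r s : ℝ)*(θ-φ))
        + (Real.cos ((m2 p q : ℝ)*(θ+φ)) * Real.cos ((m1 k r s : ℝ)*(θ-φ))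
        + Real.cos ((m2 p q : ℝ)*(θ+φ)) * Real.cos ((m2 r s : ℝ)*(θ-φ))))/4
      from funext (fun φ => hpt θ φ)]
    rw [intervalIntegral.integral_div,
      intervalIntegral.integral_add
        (((contCt _ _ θ).add (contCt _ _ θ)))
        (((contCt _ _ θ).add (contCt _ _ θ))),
      intervalIntegral.integral_add (contCt _ _ θ) (contCt _ _ θ),
      intervalIntegral.integral_add (contCt _ _ θ) (contCt _ _ θ)]
  rw [intervalIntegral.integral_congr (fun θ _ => hinner θ)]
  rw [intervalIntegral.integral_div,
    intervalIntegral.integral_add ((CtInt _ _).add (CtInt _ _)) ((CtInt _ _).add (CtInt _ _)),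
    intervalIntegral.integral_add (CtInt _ _) (CtInt _ _),
    intervalIntegral.integral_add (CtInt _ _) (CtInt _ _),
    Cval, Cval, Cval, Cval]
  ring

noncomputable def Ct (m n : ℤ) (θ φ : ℝ) : ℝ :=
  Real.cos ((m:ℝ)*(θ+φ)) * Real.cos ((n:ℝ)*(θ-φ))

noncomputable def Bdy (k p q r s : ℕ) (θ φ : ℝ) : ℝ :=
  (Ct (m1 k p q) (m1 k r s) θ φ + Ct (m1 k p q) (m2 r s) θ φ
    + (Ct (m2 p q) (m1 k r s) θ φ + Ct (m2 p q) (m2 r s) θ φ))/4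

lemma Bpt (k p q r s : ℕ) (θ φ : ℝ) :
    (Real.cos (((k:ℝ) - 1 - 2*p) * ((θ+φ)/2)) * Real.cos (((k:ℝ) - 1 - 2*q) * ((θ+φ)/2)))
      * (Real.cos (((k:ℝ) - 1 - 2*r) * ((θ-φ)/2)) * Real.cos (((k:ℝ) - 1 - 2*s) * ((θ-φ)/2)))
    = Bdy k p q r s θ φ := by
  unfold Bdy Ct
  rw [pairSum k p q (θ+φ), pairSum k r s (θ-φ)]
  ring

lemma BInt_phi (k p q r s : ℕ) (θ : ℝ) :
    IntervalIntegrable (fun φ => Bdy k p q r s θ φ) volume 0 π := by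
  unfold Bdy Ct
  exact (((contCt _ _ θ).add (contCt _ _ θ)).add
    ((contCt _ _ θ).add (contCt _ _ θ))).div_const 4

lemma Binner (k p q r s : ℕ) (θ : ℝ) :
    (∫ φ in (0:ℝ)..π, Bdy k p q r s θ φ)
      = ((∫ φ in (0:ℝ)..π, Ct (m1 k p q) (m1 k r s) θ φ)
        + (∫ φ in (0:ℝ)..π, Ct (m1 k p q) (m2 r s) θ φ)
        + ((∫ φ in (0:ℝ)..π, Ct (m2 p q) (m1 k r s) θ φ)
        + (∫ φ in (0:ℝ)..π, Ct (m2 p q) (m2 r s) θ φ)))/4 := by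
  unfold Bdy Ct
  rw [intervalIntegral.integral_div,
    intervalIntegral.integral_add ((contCt _ _ θ).add (contCt _ _ θ))
      ((contCt _ _ θ).add (contCt _ _ θ)),
    intervalIntegral.integral_add (contCt _ _ θ) (contCt _ _ θ),
    intervalIntegral.integral_add (contCt _ _ θ) (contCt _ _ θ)]

lemma BInt_theta (k p q r s : ℕ) :
    IntervalIntegrable (fun θ => ∫ φ in (0:ℝ)..π, Bdy k p q r s θ φ) volume 0 π := by
  rw [show (fun θ => ∫ φ in (0:ℝ)..π, Bdy k p q r s θ φ)
      = fun θ => ((∫ φ in (0:ℝ)..π, Ct (m1 k p q) (m1 k r s) θ φ)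
        + (∫ φ in (0:ℝ)..π, Ct (m1 k p q) (m2 r s) θ φ)
        + ((∫ φ in (0:ℝ)..π, Ct (m2 p q) (m1 k r s) θ φ)
        + (∫ φ in (0:ℝ)..π, Ct (m2 p q) (m2 r s) θ φ)))/4
    from funext (Binner k p q r s)]
  unfold Ct
  exact (((CtInt _ _).add (CtInt _ _)).add ((CtInt _ _).add (CtInt _ _))).div_const 4

lemma BT (k p q r s : ℕ) :
    (∫ θ in (0:ℝ)..π, ∫ φ in (0:ℝ)..π, Bdy k p q r s θ φ)
      = (Vform (m1 k p q) (m1 k r s) + Vform (m1 k p q) (m2 r s)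
          + (Vform (m2 p q) (m1 k r s) + Vform (m2 p q) (m2 r s)))/4 := by
  rw [intervalIntegral.integral_congr (fun θ _ => Binner k p q r s θ)]
  unfold Ct
  rw [intervalIntegral.integral_div,
    intervalIntegral.integral_add ((CtInt _ _).add (CtInt _ _)) ((CtInt _ _).add (CtInt _ _)),
    intervalIntegral.integral_add (CtInt _ _) (CtInt _ _),
    intervalIntegral.integral_add (CtInt _ _) (CtInt _ _),
    Cval, Cval, Cval, Cval]

lemma intSum {ι : Type*} (s : Finset ι) (f : ι → ℝ → ℝ)
    (h : ∀ i ∈ s, IntervalIntegrable (f i) volume 0 π) :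
    IntervalIntegrable (fun θ => ∑ i ∈ s, f i θ) volume 0 π := by
  have h2 := IntervalIntegrable.sum s h
  have e : (∑ i ∈ s, f i) = fun θ => ∑ i ∈ s, f i θ := by
    funext θ; simp [Finset.sum_apply]
  rwa [e] at h2

lemma expandSq (k : ℕ) (θ φ : ℝ) :
    (Sk k ((θ+φ)/2) * Sk k ((θ-φ)/2))^2
      = ∑ p ∈ Finset.range k, ∑ q ∈ Finset.range k, ∑ r ∈ Finset.range k, ∑ s ∈ Finset.range k,
          Bdy k p q r s θ φ := by
  have h1 : ∀ w : ℝ, (Sk k w)^2 = ∑ p ∈ Finset.range k, ∑ q ∈ Finset.range k,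
      Real.cos (((k:ℝ) - 1 - 2*p) * w) * Real.cos (((k:ℝ) - 1 - 2*q) * w) := by
    intro w
    rw [sq, Sk, Finset.sum_mul_sum]
  rw [mul_pow, h1, h1, Finset.sum_mul]
  refine Finset.sum_congr rfl fun p _ => ?_
  rw [Finset.sum_mul]
  refine Finset.sum_congr rfl fun q _ => ?_
  rw [Finset.mul_sum]
  refine Finset.sum_congr rfl fun r _ => ?_
  rw [Finset.mul_sum]
  refine Finset.sum_congr rfl fun s _ => ?_
  exact Bpt k p q r s θ φ

lemma countF (k : ℕ) :
    (∑ x ∈ Finset.range k ×ˢ Finset.range k, (indR (m1 k x.1 x.2) + indR (m2 x.1 x.2)))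
      = 2 * (k:ℝ) := by
  rw [Finset.sum_add_distrib]
  have hA : (∑ x ∈ Finset.range k ×ˢ Finset.range k, indR (m1 k x.1 x.2)) = (k:ℝ) := by
    rw [Finset.sum_product]
    have : ∀ p ∈ Finset.range k, (∑ q ∈ Finset.range k, indR (m1 k p q)) = 1 := by
      intro p hp
      have hp' : p < k := Finset.mem_range.1 hp
      have : ∀ q : ℕ, indR (m1 k p q) = if q = k - 1 - p then (1:ℝ) else 0 := by
        intro q
        unfold indR m1
        congr 1
        apply propext
        constructor <;> intro h <;> omega
      simp only [this]
      rw [Finset.sum_ite_eq' (Finset.range k) (k - 1 - p) (fun _ => (1:ℝ))]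
      simp [Finset.mem_range]
      omega
    rw [Finset.sum_congr rfl this]
    simp
  have hB : (∑ x ∈ Finset.range k ×ˢ Finset.range k, indR (m2 x.1 x.2)) = (k:ℝ) := by
    rw [Finset.sum_product]
    have : ∀ p ∈ Finset.range k, (∑ q ∈ Finset.range k, indR (m2 p q)) = 1 := by
      intro p hp
      have hp' : p < k := Finset.mem_range.1 hp
      have : ∀ q : ℕ, indR (m2 p q) = if q = p then (1:ℝ) else 0 := by
        intro q
        unfold indR m2
        congr 1
        apply propext
        constructor <;> intro h <;> omega
      simp only [this]
      rw [Finset.sum_ite_eq' (Finset.range k) p (fun _ => (1:ℝ))]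
      simp [Finset.mem_range, hp']
    rw [Finset.sum_congr rfl this]
    simp
  rw [hA, hB]
  ring

lemma Kval (k : ℕ) :
    (∫ θ in (0:ℝ)..π, ∫ φ in (0:ℝ)..π, (Sk k ((θ+φ)/2) * Sk k ((θ-φ)/2))^2)
      = (k:ℝ)^2 * π^2 := by
  -- interchange integral and sums
  have hinner : ∀ θ : ℝ,
      (∫ φ in (0:ℝ)..π, (Sk k ((θ+φ)/2) * Sk k ((θ-φ)/2))^2)
      = ∑ p ∈ Finset.range k, ∑ q ∈ Finset.range k, ∑ r ∈ Finset.range k, ∑ s ∈ Finset.range k,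
          ∫ φ in (0:ℝ)..π, Bdy k p q r s θ φ := by
    intro θ
    rw [show (fun φ => (Sk k ((θ+φ)/2) * Sk k ((θ-φ)/2))^2)
        = fun φ => ∑ p ∈ Finset.range k, ∑ q ∈ Finset.range k, ∑ r ∈ Finset.range k,
            ∑ s ∈ Finset.range k, Bdy k p q r s θ φ
      from funext (fun φ => expandSq k θ φ)]
    rw [intervalIntegral.integral_finset_sum (fun p _ => intSum _ _ (fun q _ =>
      intSum _ _ (fun r _ => intSum _ _ (fun s _ => BInt_phi k p q r s θ))))]
    refine Finset.sum_congr rfl fun p _ => ?_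
    rw [intervalIntegral.integral_finset_sum (fun q _ =>
      intSum _ _ (fun r _ => intSum _ _ (fun s _ => BInt_phi k p q r s θ)))]
    refine Finset.sum_congr rfl fun q _ => ?_
    rw [intervalIntegral.integral_finset_sum (fun r _ =>
      intSum _ _ (fun s _ => BInt_phi k p q r s θ))]
    refine Finset.sum_congr rfl fun r _ => ?_
    rw [intervalIntegral.integral_finset_sum (fun s _ => BInt_phi k p q r s θ)]
  rw [intervalIntegral.integral_congr (fun θ _ => hinner θ)]
  rw [intervalIntegral.integral_finset_sum (fun p _ => intSum _ _ (fun q _ =>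
    intSum _ _ (fun r _ => intSum _ _ (fun s _ => BInt_theta k p q r s))))]
  have step2 : ∀ p ∈ Finset.range k,
      (∫ θ in (0:ℝ)..π, ∑ q ∈ Finset.range k, ∑ r ∈ Finset.range k, ∑ s ∈ Finset.range k,
          ∫ φ in (0:ℝ)..π, Bdy k p q r s θ φ)
      = ∑ q ∈ Finset.range k, ∑ r ∈ Finset.range k, ∑ s ∈ Finset.range k,
          ∫ θ in (0:ℝ)..π, ∫ φ in (0:ℝ)..π, Bdy k p q r s θ φ := by
    intro p _
    rw [intervalIntegral.integral_finset_sum (fun q _ =>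
      intSum _ _ (fun r _ => intSum _ _ (fun s _ => BInt_theta k p q r s)))]
    refine Finset.sum_congr rfl fun q _ => ?_
    rw [intervalIntegral.integral_finset_sum (fun r _ =>
      intSum _ _ (fun s _ => BInt_theta k p q r s))]
    refine Finset.sum_congr rfl fun r _ => ?_
    rw [intervalIntegral.integral_finset_sum (fun s _ => BInt_theta k p q r s)]
  rw [Finset.sum_congr rfl step2]
  -- plug in values
  have step3 : ∀ p q r s : ℕ,
      (∫ θ in (0:ℝ)..π, ∫ φ in (0:ℝ)..π, Bdy k p q r s θ φ)
      = (Vform (m1 k p q) (m1 k r s) + Vform (m1 k p q) (m2 r s)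
          + (Vform (m2 p q) (m1 k r s) + Vform (m2 p q) (m2 r s)))/4 := BT k
  simp only [step3]
  -- flatten to pair sums
  rw [show (∑ p ∈ Finset.range k, ∑ q ∈ Finset.range k, ∑ r ∈ Finset.range k,
        ∑ s ∈ Finset.range k,
        (Vform (m1 k p q) (m1 k r s) + Vform (m1 k p q) (m2 r s)
          + (Vform (m2 p q) (m1 k r s) + Vform (m2 p q) (m2 r s)))/4)
      = ∑ x ∈ Finset.range k ×ˢ Finset.range k, ∑ y ∈ Finset.range k ×ˢ Finset.range k,
        (Vform (m1 k x.1 x.2) (m1 k y.1 y.2) + Vform (m1 k x.1 x.2) (m2 y.1 y.2)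
          + (Vform (m2 x.1 x.2) (m1 k y.1 y.2) + Vform (m2 x.1 x.2) (m2 y.1 y.2)))/4 by
    simp only [Finset.sum_product]]
  set P := Finset.range k ×ˢ Finset.range k with hP
  set F : ℕ × ℕ → ℝ := fun x => indR (m1 k x.1 x.2) + indR (m2 x.1 x.2) with hF
  set W : ℕ × ℕ → ℕ × ℕ → ℝ := fun x y =>
    (Vform (m1 k x.1 x.2) (m1 k y.1 y.2) + Vform (m1 k x.1 x.2) (m2 y.1 y.2)
      + (Vform (m2 x.1 x.2) (m1 k y.1 y.2) + Vform (m2 x.1 x.2) (m2 y.1 y.2)))/4 with hW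
  have hswap : (∑ x ∈ P, ∑ y ∈ P, W x y) = ∑ x ∈ P, ∑ y ∈ P, W y x := Finset.sum_comm
  have hpair : ∀ x y : ℕ × ℕ, W x y + W y x = π^2/2 * (F x * F y) := by
    intro x y
    have h1 := Cpair' (m1 k x.1 x.2) (m1 k y.1 y.2)
    have h2 := Cpair' (m1 k x.1 x.2) (m2 y.1 y.2)
    have h3 := Cpair' (m2 x.1 x.2) (m1 k y.1 y.2)
    have h4 := Cpair' (m2 x.1 x.2) (m2 y.1 y.2)
    simp only [hW, hF]
    linear_combination (h1 + h2 + h3 + h4)/4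
  have hdouble : (∑ x ∈ P, ∑ y ∈ P, W x y) + (∑ x ∈ P, ∑ y ∈ P, W y x)
      = ∑ x ∈ P, ∑ y ∈ P, (W x y + W y x) := by
    rw [← Finset.sum_add_distrib]
    exact Finset.sum_congr rfl fun x _ => (Finset.sum_add_distrib).symm
  have hval : (∑ x ∈ P, ∑ y ∈ P, (W x y + W y x)) = π^2/2 * ((∑ x ∈ P, F x) * (∑ y ∈ P, F y)) := by
    simp only [hpair]
    rw [Finset.sum_mul_sum, Finset.mul_sum]
    exact Finset.sum_congr rfl fun x _ => (Finset.mul_sum _ _ _).symm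
  have hcount : (∑ x ∈ P, F x) = 2 * (k:ℝ) := countF k
  have : (∑ x ∈ P, ∑ y ∈ P, W x y) = (k:ℝ)^2 * π^2 := by
    have h2 : (2:ℝ) * (∑ x ∈ P, ∑ y ∈ P, W x y) = 2 * ((k:ℝ)^2 * π^2) := by
      rw [two_mul]
      nth_rewrite 2 [hswap]
      rw [hdouble, hval, hcount]
      ring
    linarith
  exact this



lemma chebT_cos (k : ℕ) (ψ : ℝ) : chebT k (Real.cos ψ) = Real.cos ((k:ℝ) * ψ) := by
  unfold chebT
  have := Polynomial.Chebyshev.T_real_cos ψ (k:ℤ)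
  push_cast at this ⊢
  exact this

/-- For every `k ≥ 1`:
`∫_{−1}^1 ∫_{−1}^1 ((T_k(x) − T_k(y))/(x − y))² (1−x²)^{−1/2} (1−y²)^{−1/2} dx dy = k²π²`. -/
theorem stmt_19 (k : ℕ) (hk : 1 ≤ k) :
    (∫ x in (-1 : ℝ)..1, ∫ y in (-1 : ℝ)..1,
        ((chebT k x - chebT k y) / (x - y)) ^ 2 *
          (Real.sqrt (1 - x ^ 2))⁻¹ * (Real.sqrt (1 - y ^ 2))⁻¹)
      = (k : ℝ) ^ 2 * Real.pi ^ 2 := by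
  have h1 : ∀ x : ℝ, (∫ y in (-1 : ℝ)..1,
        ((chebT k x - chebT k y) / (x - y)) ^ 2 *
          (Real.sqrt (1 - x ^ 2))⁻¹ * (Real.sqrt (1 - y ^ 2))⁻¹)
      = (∫ φ in (0:ℝ)..π, ((chebT k x - chebT k (Real.cos φ)) / (x - Real.cos φ)) ^ 2)
          * (Real.sqrt (1 - x ^ 2))⁻¹ := by
    intro x
    have e : (fun y => ((chebT k x - chebT k y) / (x - y)) ^ 2 *
          (Real.sqrt (1 - x ^ 2))⁻¹ * (Real.sqrt (1 - y ^ 2))⁻¹)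
        = fun y => ((Real.sqrt (1 - x ^ 2))⁻¹ * ((chebT k x - chebT k y) / (x - y)) ^ 2)
            * (Real.sqrt (1 - y ^ 2))⁻¹ := by
      funext y; ring
    rw [e, SUB (fun y => (Real.sqrt (1 - x ^ 2))⁻¹ * ((chebT k x - chebT k y) / (x - y)) ^ 2),
      intervalIntegral.integral_const_mul]
    ring
  rw [intervalIntegral.integral_congr (fun x _ => h1 x),
    SUB (fun x => ∫ φ in (0:ℝ)..π, ((chebT k x - chebT k (Real.cos φ)) / (x - Real.cos φ)) ^ 2)]
  have h3 : ∀ θ : ℝ, (∫ φ in (0:ℝ)..π,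
        ((chebT k (Real.cos θ) - chebT k (Real.cos φ)) / (Real.cos θ - Real.cos φ)) ^ 2)
      = ∫ φ in (0:ℝ)..π, (Sk k ((θ+φ)/2) * Sk k ((θ-φ)/2))^2 := by
    intro θ
    apply intervalIntegral.integral_congr_ae
    have hsing : ∀ᵐ φ : ℝ, φ ≠ Real.arccos (Real.cos θ) := by
      have h0 : volume ({Real.arccos (Real.cos θ)} : Set ℝ) = 0 :=
        MeasureTheory.measure_singleton _
      have := MeasureTheory.measure_eq_zero_iff_ae_notMem.mp h0
      filter_upwards [this] with φ hφ
      simpa using hφ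
    filter_upwards [hsing] with φ hφ hmem
    have hφI : φ ∈ Set.Ioc (0:ℝ) π := by rwa [Set.uIoc_of_le Real.pi_pos.le] at hmem
    have hne : Real.cos θ - Real.cos φ ≠ 0 := by
      intro hc
      apply hφ
      have h2 : Real.cos φ = Real.cos θ := by linarith
      rw [← Real.arccos_cos hφI.1.le hφI.2, h2]
    rw [chebT_cos, chebT_cos, keyId k θ φ, mul_div_assoc, div_self hne, mul_one]
  rw [intervalIntegral.integral_congr (fun θ _ => h3 θ)]
  exact Kval k
end
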